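/- For every positive integer m, the limit capacity c_m := lim_{n→∞} log₂ f(m,n) / (mn) exists (as a finite real number). -/

import Mathlib

noncomputable section

/-- Points of the plane `ℝ²`. -/
abbrev Pt := ℝ × ℝ

/-- The embedding of the lattice `ℤ²` into `ℝ²`. -/
def toPt (v : ℤ × ℤ) : Pt := ((v.1 : ℝ), (v.2 : ℝ))

/-- The integer points of `ℝ²`. -/
def intPts : Set Pt := Set.range toPt

/-- The half-integer points `(1/2)ℤ²` of `ℝ²`. -/
def halfPts : Set Pt := {p | (∃ a : ℤ, p.1 = (a : ℝ) / 2) ∧ (∃ b : ℤ, p.2 = (b : ℝ) / 2)}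

/-- The convex hull in `ℝ²` of a finite set of lattice points. -/
def hull (s : Finset (ℤ × ℤ)) : Set Pt := convexHull ℝ (toPt '' ↑s)

/-- A unimodular (= maximal lattice) triangulation of a closed region `R ⊆ ℝ²`:
a finite family of lattice triangles of area `1/2` covering `R`, any two of which
meet in a common face, and whose vertex set is exactly `R ∩ ℤ²`. -/
structure UnimodularTriangulation (R : Set Pt) where
  /-- the triangles, each given by its (three-element) vertex set -/
  tris : Finset (Finset (ℤ × ℤ))
  card3 : ∀ T ∈ tris, T.card = 3
  /-- each triangle is unimodular, i.e. has area 1/2 -/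
  unimodular : ∀ T ∈ tris, ∀ a ∈ T, ∀ b ∈ T, ∀ c ∈ T,
    a ≠ b → a ≠ c → b ≠ c →
    |(b.1 - a.1) * (c.2 - a.2) - (c.1 - a.1) * (b.2 - a.2)| = 1
  /-- the triangles cover exactly `R` -/
  cover : ⋃ T ∈ tris, hull T = R
  /-- any two triangles intersect in a common face -/
  glue : ∀ T₁ ∈ tris, ∀ T₂ ∈ tris, hull T₁ ∩ hull T₂ = hull (T₁ ∩ T₂)
  /-- the vertex set is exactly `R ∩ ℤ²` -/
  vertices : ∀ v : ℤ × ℤ, (∃ T ∈ tris, v ∈ T) ↔ toPt v ∈ R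

/-- The edges of a triangulation: the two-element subsets of its triangles. -/
def UnimodularTriangulation.edges {R : Set Pt} (𝒯 : UnimodularTriangulation R) :
    Finset (Finset (ℤ × ℤ)) :=
  𝒯.tris.biUnion fun T => T.powersetCard 2

/-- The segment in `ℝ²` spanned by an edge. -/
def edgeSeg (e : Finset (ℤ × ℤ)) : Set Pt := convexHull ℝ (toPt '' ↑e)

open scoped Classical in
/-- The inner (non-boundary) edges of a triangulation of `R`: those edges whose
segment is not contained in the boundary (topological frontier) of `R`. -/
def UnimodularTriangulation.innerEdges {R : Set Pt} (𝒯 : UnimodularTriangulation R) :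
    Finset (Finset (ℤ × ℤ)) :=
  𝒯.edges.filter fun e => ¬ (edgeSeg e ⊆ frontier R)

/-- The midpoint of an edge `{u, v}`. -/
def edgeMid (e : Finset (ℤ × ℤ)) : Pt := (2 : ℝ)⁻¹ • ∑ v ∈ e, toPt v

/-- The grid rectangle `P_{m,n} = [0,m] × [0,n] ⊆ ℝ²`. -/
def gridRegion (m n : ℕ) : Set Pt := Set.Icc ((0, 0) : Pt) ((m : ℝ), (n : ℝ))

/-- `f m n` is the number of unimodular triangulations of the grid rectangle `P_{m,n}`. -/
def f (m n : ℕ) : ℕ := Nat.card (UnimodularTriangulation (gridRegion m n))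

/-! ### Auxiliary development -/

namespace KZ

open Finset

lemma toPt_inj : Function.Injective toPt := by
  intro a b h
  have h1 : (a.1 : ℝ) = b.1 := congrArg Prod.fst h
  have h2 : (a.2 : ℝ) = b.2 := congrArg Prod.snd h
  exact Prod.ext (by exact_mod_cast h1) (by exact_mod_cast h2)

lemma mem_hull_iff {s : Finset (ℤ × ℤ)} {p : Pt} :
    p ∈ hull s ↔ ∃ w : (ℤ × ℤ) → ℝ,
      (∀ v ∈ s, 0 ≤ w v) ∧ ∑ v ∈ s, w v = 1 ∧ ∑ v ∈ s, w v • toPt v = p := by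
  classical
  have himg : (toPt '' ↑s) = ↑(s.image toPt) := by simp
  constructor
  · intro hp
    rw [hull, himg, Finset.convexHull_eq] at hp
    obtain ⟨w, hw0, hw1, hwc⟩ := hp
    refine ⟨fun v => w (toPt v), fun v hv => hw0 _ (Finset.mem_image_of_mem _ hv), ?_, ?_⟩
    · rw [← Finset.sum_image (g := toPt) (f := w) (fun x _ y _ h => toPt_inj h)]
      exact hw1
    · rw [Finset.centerMass_eq_of_sum_1 _ id hw1] at hwc
      rw [← hwc, Finset.sum_image (fun x _ y _ h => toPt_inj h)]
      rfl
  · rintro ⟨w, hw0, hw1, hwc⟩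
    have hmem : s.centerMass w toPt ∈ convexHull ℝ (toPt '' ↑s) :=
      Finset.centerMass_mem_convexHull s hw0 (by rw [hw1]; norm_num)
        (fun v hv => Set.mem_image_of_mem _ hv)
    rw [Finset.centerMass_eq_of_sum_1 _ toPt hw1, hwc] at hmem
    exact hmem

lemma hull_mono {s t : Finset (ℤ × ℤ)} (h : s ⊆ t) : hull s ⊆ hull t :=
  convexHull_mono (Set.image_mono (Finset.coe_subset.2 h))

lemma mem_hull_self {s : Finset (ℤ × ℤ)} {v : ℤ × ℤ} (h : v ∈ s) : toPt v ∈ hull s :=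
  subset_convexHull _ _ ⟨v, by simpa using h, rfl⟩

lemma hull_empty : hull (∅ : Finset (ℤ × ℤ)) = ∅ := by
  simp [hull]

lemma hull_singleton (v : ℤ × ℤ) : hull {v} = {toPt v} := by
  simp [hull]

lemma sum3 {M : Type*} [AddCommMonoid M] {a b c : ℤ × ℤ} (hab : a ≠ b) (hac : a ≠ c)
    (hbc : b ≠ c) (g : ℤ × ℤ → M) :
    ∑ v ∈ ({a, b, c} : Finset (ℤ × ℤ)), g v = g a + g b + g c := by
  rw [show ({a, b, c} : Finset (ℤ × ℤ)) = insert a (insert b {c}) from rfl]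
  rw [Finset.sum_insert (by simp [hab, hac]), Finset.sum_insert (by simp [hbc]),
    Finset.sum_singleton, add_assoc]

lemma mem_hull_triple {a b c : ℤ × ℤ} (hab : a ≠ b) (hac : a ≠ c) (hbc : b ≠ c)
    {w1 w2 w3 : ℝ} (h1 : 0 ≤ w1) (h2 : 0 ≤ w2) (h3 : 0 ≤ w3) (hs : w1 + w2 + w3 = 1) :
    w1 • toPt a + w2 • toPt b + w3 • toPt c ∈ hull {a, b, c} := by
  classical
  rw [mem_hull_iff]
  refine ⟨fun v => if v = a then w1 else if v = b then w2 else w3, ?_, ?_, ?_⟩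
  · intro v _
    by_cases hva : v = a
    · simpa [hva] using h1
    · by_cases hvb : v = b <;> simp [hva, hvb, Ne.symm hab, h2, h3]
  · rw [sum3 hab hac hbc]
    simp [hab.symm, hac.symm, hbc.symm, Ne.symm]
    · simpa using hs
  · rw [sum3 hab hac hbc]
    simp [hab.symm, hac.symm, hbc.symm, Ne.symm]

lemma mem_hull_pair {a b : ℤ × ℤ} (hab : a ≠ b) {w1 w2 : ℝ} (h1 : 0 ≤ w1) (h2 : 0 ≤ w2)
    (hs : w1 + w2 = 1) : w1 • toPt a + w2 • toPt b ∈ hull {a, b} := by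
  classical
  rw [mem_hull_iff]
  refine ⟨fun v => if v = a then w1 else w2, ?_, ?_, ?_⟩
  · intro v _
    by_cases hva : v = a <;> simp [hva, h1, h2]
  · rw [Finset.sum_pair hab]
    simpa [hab.symm] using hs
  · rw [Finset.sum_pair hab]
    simp [hab.symm]

def idet (a b c : ℤ × ℤ) : ℤ := (b.1 - a.1) * (c.2 - a.2) - (c.1 - a.1) * (b.2 - a.2)

lemma weights_unique {a b c : ℤ × ℤ} (hab : a ≠ b) (hac : a ≠ c) (hbc : b ≠ c)
    (hd : idet a b c ≠ 0) {w w' : (ℤ × ℤ) → ℝ}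
    (hw1 : ∑ v ∈ ({a, b, c} : Finset (ℤ × ℤ)), w v = 1)
    (hw1' : ∑ v ∈ ({a, b, c} : Finset (ℤ × ℤ)), w' v = 1)
    (hww' : ∑ v ∈ ({a, b, c} : Finset (ℤ × ℤ)), w v • toPt v
          = ∑ v ∈ ({a, b, c} : Finset (ℤ × ℤ)), w' v • toPt v) :
    ∀ v ∈ ({a, b, c} : Finset (ℤ × ℤ)), w v = w' v := by
  rw [sum3 hab hac hbc] at hw1 hw1'
  rw [sum3 hab hac hbc (g := fun v => w v • toPt v),
    sum3 hab hac hbc (g := fun v => w' v • toPt v)] at hww'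
  have hx : w a * a.1 + w b * b.1 + w c * c.1
      = w' a * a.1 + w' b * b.1 + w' c * c.1 := by
    have := congrArg Prod.fst hww'
    simpa [toPt, Prod.fst_add, smul_eq_mul] using this
  have hy : w a * a.2 + w b * b.2 + w c * c.2
      = w' a * a.2 + w' b * b.2 + w' c * c.2 := by
    have := congrArg Prod.snd hww'
    simpa [toPt, Prod.snd_add, smul_eq_mul] using this
  have hD : ((idet a b c : ℤ) : ℝ) ≠ 0 := by exact_mod_cast hd
  have hDe : ((idet a b c : ℤ) : ℝ)
      = ((b.1 : ℝ) - a.1) * ((c.2 : ℝ) - a.2) - ((c.1 : ℝ) - a.1) * ((b.2 : ℝ) - a.2) := by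
    simp only [idet]
    push_cast
    ring
  have hb : w b = w' b := by
    have h0 : (w b - w' b) * ((idet a b c : ℤ) : ℝ) = 0 := by
      rw [hDe]
      linear_combination (((c.2 : ℝ) - a.2)) * hx - (((c.1 : ℝ) - a.1)) * hy
        - ((c.2 : ℝ) - a.2) * (a.1 : ℝ) * hw1 + ((c.2 : ℝ) - a.2) * (a.1 : ℝ) * hw1'
        + ((c.1 : ℝ) - a.1) * (a.2 : ℝ) * hw1 - ((c.1 : ℝ) - a.1) * (a.2 : ℝ) * hw1'
    have := mul_eq_zero.1 h0
    rcases this with h | h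
    · linarith [sub_eq_zero.1 (by linarith : w b - w' b = 0)]
    · exact absurd h hD
  have hc : w c = w' c := by
    have h0 : (w c - w' c) * ((idet a b c : ℤ) : ℝ) = 0 := by
      rw [hDe]
      linear_combination (-((b.2 : ℝ) - a.2)) * hx + (((b.1 : ℝ) - a.1)) * hy
        + ((b.2 : ℝ) - a.2) * (a.1 : ℝ) * hw1 - ((b.2 : ℝ) - a.2) * (a.1 : ℝ) * hw1'
        - ((b.1 : ℝ) - a.1) * (a.2 : ℝ) * hw1 + ((b.1 : ℝ) - a.1) * (a.2 : ℝ) * hw1'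
    rcases mul_eq_zero.1 h0 with h | h
    · linarith [sub_eq_zero.1 (by linarith : w c - w' c = 0)]
    · exact absurd h hD
  have ha : w a = w' a := by linarith
  intro v hv
  rcases Finset.mem_insert.1 hv with h | hv
  · rw [h]; exact ha
  rcases Finset.mem_insert.1 hv with h | hv
  · rw [h]; exact hb
  · rw [Finset.mem_singleton.1 hv]; exact hc

lemma mem_hull_inter {a b c : ℤ × ℤ} (hab : a ≠ b) (hac : a ≠ c) (hbc : b ≠ c)
    (hd : idet a b c ≠ 0) {S₁ S₂ : Finset (ℤ × ℤ)}
    (h₁ : S₁ ⊆ {a, b, c}) (h₂ : S₂ ⊆ {a, b, c}) {p : Pt}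
    (hp₁ : p ∈ hull S₁) (hp₂ : p ∈ hull S₂) : p ∈ hull (S₁ ∩ S₂) := by
  classical
  obtain ⟨w₁, hw₁0, hw₁1, hw₁c⟩ := mem_hull_iff.1 hp₁
  obtain ⟨w₂, hw₂0, hw₂1, hw₂c⟩ := mem_hull_iff.1 hp₂
  set u₁ : (ℤ × ℤ) → ℝ := fun v => if v ∈ S₁ then w₁ v else 0 with hu₁
  set u₂ : (ℤ × ℤ) → ℝ := fun v => if v ∈ S₂ then w₂ v else 0 with hu₂
  have e₁ : ∑ v ∈ ({a, b, c} : Finset (ℤ × ℤ)), u₁ v = 1 := by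
    rw [← Finset.sum_subset h₁ (fun v _ hvn => by simp [hu₁, hvn])]
    rw [show ∑ v ∈ S₁, u₁ v = ∑ v ∈ S₁, w₁ v from
      Finset.sum_congr rfl (fun v hv => by simp [hu₁, hv])]
    exact hw₁1
  have e₂ : ∑ v ∈ ({a, b, c} : Finset (ℤ × ℤ)), u₂ v = 1 := by
    rw [← Finset.sum_subset h₂ (fun v _ hvn => by simp [hu₂, hvn])]
    rw [show ∑ v ∈ S₂, u₂ v = ∑ v ∈ S₂, w₂ v from
      Finset.sum_congr rfl (fun v hv => by simp [hu₂, hv])]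
    exact hw₂1
  have ec₁ : ∑ v ∈ ({a, b, c} : Finset (ℤ × ℤ)), u₁ v • toPt v = p := by
    rw [← Finset.sum_subset h₁ (fun v _ hvn => by simp [hu₁, hvn])]
    rw [show ∑ v ∈ S₁, u₁ v • toPt v = ∑ v ∈ S₁, w₁ v • toPt v from
      Finset.sum_congr rfl (fun v hv => by simp [hu₁, hv])]
    exact hw₁c
  have ec₂ : ∑ v ∈ ({a, b, c} : Finset (ℤ × ℤ)), u₂ v • toPt v = p := by
    rw [← Finset.sum_subset h₂ (fun v _ hvn => by simp [hu₂, hvn])]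
    rw [show ∑ v ∈ S₂, u₂ v • toPt v = ∑ v ∈ S₂, w₂ v • toPt v from
      Finset.sum_congr rfl (fun v hv => by simp [hu₂, hv])]
    exact hw₂c
  have huniq := weights_unique hab hac hbc hd e₁ e₂ (ec₁.trans ec₂.symm)
  rw [mem_hull_iff]
  refine ⟨u₁, fun v _ => by by_cases hv : v ∈ S₁ <;> simp [hu₁, hv, hw₁0 v], ?_, ?_⟩
  · rw [Finset.sum_subset (Finset.inter_subset_left (s₂ := S₂))
      (fun v hv hvn => ?_)]
    · rw [show ∑ v ∈ S₁, u₁ v = ∑ v ∈ ({a,b,c} : Finset (ℤ×ℤ)), u₁ v from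
        (Finset.sum_subset h₁ (fun v _ hvn => by simp [hu₁, hvn]))]
      exact e₁
    · have hv₂ : v ∉ S₂ := fun hv₂ => hvn (Finset.mem_inter.2 ⟨hv, hv₂⟩)
      have : u₁ v = u₂ v := huniq v (h₁ hv)
      simp only [hu₁, hu₂, if_pos hv, if_neg hv₂] at this ⊢
      exact this
  · rw [Finset.sum_subset (Finset.inter_subset_left (s₂ := S₂))
      (fun v hv hvn => ?_)]
    · rw [show ∑ v ∈ S₁, u₁ v • toPt v = ∑ v ∈ ({a,b,c} : Finset (ℤ×ℤ)), u₁ v • toPt v from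
        (Finset.sum_subset h₁ (fun v _ hvn => by simp [hu₁, hvn]))]
      exact ec₁
    · have hv₂ : v ∉ S₂ := fun hv₂ => hvn (Finset.mem_inter.2 ⟨hv, hv₂⟩)
      have h12 : u₁ v = u₂ v := huniq v (h₁ hv)
      simp only [hu₁, hu₂, if_pos hv, if_neg hv₂] at h12
      simp [hu₁, if_pos hv, h12]


lemma toPt_add (u v : ℤ × ℤ) : toPt (u + v) = toPt u + toPt v := by
  simp [toPt, Prod.ext_iff]

variable {R : Set Pt}

lemma uni_idet (𝒯 : UnimodularTriangulation R) {T : Finset (ℤ × ℤ)} (hT : T ∈ 𝒯.tris)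
    {a b c : ℤ × ℤ} (ha : a ∈ T) (hb : b ∈ T) (hc : c ∈ T)
    (hab : a ≠ b) (hac : a ≠ c) (hbc : b ≠ c) : |idet a b c| = 1 :=
  𝒯.unimodular T hT a ha b hb c hc hab hac hbc

lemma idet_ne_zero {a b c : ℤ × ℤ} (h : |idet a b c| = 1) : idet a b c ≠ 0 := by
  intro h0; rw [h0] at h; simp at h

lemma third_elt {T : Finset (ℤ × ℤ)} (h3 : T.card = 3) {A C : ℤ × ℤ}
    (hA : A ∈ T) (hC : C ∈ T) (hAC : A ≠ C) :
    ∃ c0, c0 ≠ A ∧ c0 ≠ C ∧ T = {A, C, c0} := by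
  classical
  have hsub : ({A, C} : Finset (ℤ × ℤ)) ⊆ T := by
    intro v hv; rcases Finset.mem_insert.1 hv with h | h
    · rw [h]; exact hA
    · rw [Finset.mem_singleton.1 h]; exact hC
  have hcard2 : ({A, C} : Finset (ℤ × ℤ)).card = 2 := Finset.card_pair hAC
  have hsd : (T \ {A, C}).card = 1 := by
    rw [Finset.card_sdiff_of_subset hsub, h3, hcard2]
  obtain ⟨c0, hc0⟩ := Finset.card_eq_one.1 hsd
  have hc0mem : c0 ∈ T \ ({A, C} : Finset (ℤ × ℤ)) := by rw [hc0]; exact Finset.mem_singleton_self _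
  have hc0T := (Finset.mem_sdiff.1 hc0mem).1
  have hc0n := (Finset.mem_sdiff.1 hc0mem).2
  refine ⟨c0, ?_, ?_, ?_⟩
  · intro h; exact hc0n (by rw [h]; simp)
  · intro h; exact hc0n (by rw [h]; simp)
  · have : ({A, C} : Finset (ℤ × ℤ)) ∪ (T \ {A, C}) = T := Finset.union_sdiff_of_subset hsub
    rw [hc0] at this
    rw [← this]
    ext v
    simp [Finset.mem_insert, Finset.mem_union, Finset.mem_singleton, or_assoc]

lemma tri_present {T : Finset (ℤ × ℤ)} (h3 : T.card = 3) :
    ∃ a b c : ℤ × ℤ, a ≠ b ∧ a ≠ c ∧ b ≠ c ∧ T = {a, b, c} :=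
  Finset.card_eq_three.1 h3

lemma mem_gridRegion_iff {m n : ℕ} {p : Pt} :
    p ∈ gridRegion m n ↔ 0 ≤ p.1 ∧ p.1 ≤ m ∧ 0 ≤ p.2 ∧ p.2 ≤ n := by
  simp only [gridRegion, Set.mem_Icc, Prod.le_def]
  constructor
  · rintro ⟨⟨h1, h2⟩, h3, h4⟩; exact ⟨h1, h3, h2, h4⟩
  · rintro ⟨h1, h2, h3, h4⟩; exact ⟨⟨h1, h3⟩, h2, h4⟩

lemma toPt_mem_grid {m n : ℕ} {v : ℤ × ℤ} :
    toPt v ∈ gridRegion m n ↔ 0 ≤ v.1 ∧ v.1 ≤ (m : ℤ) ∧ 0 ≤ v.2 ∧ v.2 ≤ (n : ℤ) := by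
  rw [mem_gridRegion_iff]
  simp only [toPt]
  constructor
  · rintro ⟨h1, h2, h3, h4⟩
    exact ⟨by exact_mod_cast h1, by exact_mod_cast h2, by exact_mod_cast h3, by exact_mod_cast h4⟩
  · rintro ⟨h1, h2, h3, h4⟩
    exact ⟨by exact_mod_cast h1, by exact_mod_cast h2, by exact_mod_cast h3, by exact_mod_cast h4⟩

lemma vert_mem_grid {m n : ℕ} (𝒯 : UnimodularTriangulation (gridRegion m n))
    {T : Finset (ℤ × ℤ)} (hT : T ∈ 𝒯.tris) {v : ℤ × ℤ} (hv : v ∈ T) :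
    0 ≤ v.1 ∧ v.1 ≤ (m : ℤ) ∧ 0 ≤ v.2 ∧ v.2 ≤ (n : ℤ) :=
  toPt_mem_grid.1 ((𝒯.vertices v).1 ⟨T, hT, hv⟩)

lemma hull_subset_region {m n : ℕ} (𝒯 : UnimodularTriangulation (gridRegion m n))
    {T : Finset (ℤ × ℤ)} (hT : T ∈ 𝒯.tris) : hull T ⊆ gridRegion m n := by
  apply convexHull_min _ (convex_Icc _ _)
  rintro p ⟨v, hv, rfl⟩
  exact (𝒯.vertices v).1 ⟨T, hT, by exact_mod_cast hv⟩

lemma abs_mul_eq_one {x y : ℤ} (h : |x * y| = 1) : |x| = 1 ∧ |y| = 1 := by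
  rw [abs_mul] at h
  constructor
  · exact Int.eq_one_of_mul_eq_one_right (abs_nonneg x) h
  · exact Int.eq_one_of_mul_eq_one_left (abs_nonneg y) h

/-- Two distinct vertices of a unimodular triangle at the same height differ by 1 in `x`. -/
lemma row_step (𝒯 : UnimodularTriangulation R) {T : Finset (ℤ × ℤ)} (hT : T ∈ 𝒯.tris)
    (h3 : T.card = 3) {A C : ℤ × ℤ} (hA : A ∈ T) (hC : C ∈ T) (hAC : A ≠ C)
    (h2 : A.2 = C.2) : C.1 = A.1 + 1 ∨ C.1 = A.1 - 1 := by
  obtain ⟨c0, hc0A, hc0C, hTeq⟩ := third_elt h3 hA hC hAC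
  have habs := uni_idet 𝒯 hT hA hC (by rw [hTeq]; simp) hAC (Ne.symm hc0A) (Ne.symm hc0C)
  have heq : idet A C c0 = (C.1 - A.1) * (c0.2 - A.2) := by
    simp only [idet]; rw [← h2]; ring
  rw [heq] at habs
  rcases (abs_eq (by norm_num : (0:ℤ) ≤ 1)).1 (abs_mul_eq_one habs).1 with h | h <;> omega

lemma col_step (𝒯 : UnimodularTriangulation R) {T : Finset (ℤ × ℤ)} (hT : T ∈ 𝒯.tris)
    (h3 : T.card = 3) {A C : ℤ × ℤ} (hA : A ∈ T) (hC : C ∈ T) (hAC : A ≠ C)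
    (h1 : A.1 = C.1) : C.2 = A.2 + 1 ∨ C.2 = A.2 - 1 := by
  obtain ⟨c0, hc0A, hc0C, hTeq⟩ := third_elt h3 hA hC hAC
  have habs := uni_idet 𝒯 hT hA hC (by rw [hTeq]; simp) hAC (Ne.symm hc0A) (Ne.symm hc0C)
  have heq : idet A C c0 = -((c0.1 - A.1) * (C.2 - A.2)) := by
    simp only [idet]; rw [← h1]; ring
  rw [heq, abs_neg] at habs
  rcases (abs_eq (by norm_num : (0:ℤ) ≤ 1)).1 (abs_mul_eq_one habs).2 with h | h <;> omega

/-- A unimodular triangle cannot have all vertices at the same height. -/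
lemma no_flat_row (𝒯 : UnimodularTriangulation R) {T : Finset (ℤ × ℤ)} (hT : T ∈ 𝒯.tris)
    {k : ℤ} (hflat : ∀ v ∈ T, v.2 = k) : False := by
  obtain ⟨a, b, c, hab, hac, hbc, hTeq⟩ := tri_present (𝒯.card3 T hT)
  have ha : a ∈ T := by rw [hTeq]; simp
  have hb : b ∈ T := by rw [hTeq]; simp
  have hc : c ∈ T := by rw [hTeq]; simp
  have habs := uni_idet 𝒯 hT ha hb hc hab hac hbc
  have h0 : idet a b c = 0 := by
    simp only [idet]
    rw [hflat a ha, hflat b hb, hflat c hc]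
    ring
  rw [h0] at habs; simp at habs

/-- Every unimodular triangle has two vertices with different `x` coordinates. -/
lemma exists_x_lt (𝒯 : UnimodularTriangulation R) {T : Finset (ℤ × ℤ)} (hT : T ∈ 𝒯.tris) :
    ∃ A ∈ T, ∃ C ∈ T, A.1 < C.1 := by
  obtain ⟨a, b, c, hab, hac, hbc, hTeq⟩ := tri_present (𝒯.card3 T hT)
  have ha : a ∈ T := by rw [hTeq]; simp
  have hb : b ∈ T := by rw [hTeq]; simp
  have hc : c ∈ T := by rw [hTeq]; simp
  have habs := uni_idet 𝒯 hT ha hb hc hab hac hbc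
  by_contra hcon
  push_neg at hcon
  have h1 : b.1 = a.1 := le_antisymm (hcon a ha b hb) (hcon b hb a ha)
  have h2 : c.1 = a.1 := le_antisymm (hcon a ha c hc) (hcon c hc a ha)
  have h0 : idet a b c = 0 := by simp only [idet]; rw [h1, h2]; ring
  rw [h0] at habs; simp at habs

/-- Edges of unimodular triangles are primitive mod 2. -/
lemma not_both_even (𝒯 : UnimodularTriangulation R) {T : Finset (ℤ × ℤ)} (hT : T ∈ 𝒯.tris)
    {A C : ℤ × ℤ} (hA : A ∈ T) (hC : C ∈ T) (hAC : A ≠ C) :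
    ¬ (2 ∣ (C.1 - A.1) ∧ 2 ∣ (C.2 - A.2)) := by
  rintro ⟨⟨x, hx⟩, ⟨y, hy⟩⟩
  obtain ⟨c0, hc0A, hc0C, hTeq⟩ := third_elt (𝒯.card3 T hT) hA hC hAC
  have habs := uni_idet 𝒯 hT hA hC (by rw [hTeq]; simp) hAC (Ne.symm hc0A) (Ne.symm hc0C)
  have heq : idet A C c0 = 2 * (x * (c0.2 - A.2) - (c0.1 - A.1) * y) := by
    simp only [idet]; rw [hx, hy]; ring
  rcases abs_eq (by norm_num : (0:ℤ) ≤ 1) |>.1 habs with h | h <;> omega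

/-- `A ∈ T`, `C ∈ T`, a non-lattice point of `hull {A,C}` lying in `hull T'` forces
`A, C ∈ T'`. -/
lemma pair_subset_other (𝒯 : UnimodularTriangulation R) {T T' : Finset (ℤ × ℤ)}
    (hT : T ∈ 𝒯.tris) (hT' : T' ∈ 𝒯.tris) {A C : ℤ × ℤ}
    (hA : A ∈ T) (hC : C ∈ T) (hAC : A ≠ C) {p : Pt}
    (hp : p ∈ hull {A, C}) (hnl : ∀ v : ℤ × ℤ, toPt v ≠ p) (hp' : p ∈ hull T') :
    A ∈ T' ∧ C ∈ T' := by
  obtain ⟨c0, hc0A, hc0C, hTeq⟩ := third_elt (𝒯.card3 T hT) hA hC hAC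
  have hd : idet A C c0 ≠ 0 :=
    idet_ne_zero (uni_idet 𝒯 hT hA hC (by rw [hTeq]; simp) hAC hc0A.symm hc0C.symm)
  have hpT : p ∈ hull T := by
    refine hull_mono ?_ hp
    intro v hv
    rcases Finset.mem_insert.1 hv with h | h
    · rw [h]; exact hA
    · rw [Finset.mem_singleton.1 h]; exact hC
  have hglue : p ∈ hull (T ∩ T') := by
    rw [← 𝒯.glue T hT T' hT']; exact ⟨hpT, hp'⟩
  have hs₁ : ({A, C} : Finset (ℤ × ℤ)) ⊆ {A, C, c0} := by
    intro v hv; rcases Finset.mem_insert.1 hv with h | h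
    · rw [h]; simp
    · rw [Finset.mem_singleton.1 h]; simp
  have hs₂ : T ∩ T' ⊆ ({A, C, c0} : Finset (ℤ × ℤ)) := by
    intro v hv; rw [← hTeq]; exact (Finset.mem_inter.1 hv).1
  have hinter := mem_hull_inter hAC hc0A.symm hc0C.symm hd hs₁ hs₂ hp hglue
  have hAmem : A ∈ ({A, C} : Finset (ℤ × ℤ)) ∩ (T ∩ T') := by
    by_contra hAn
    have hsub : ({A, C} : Finset (ℤ × ℤ)) ∩ (T ∩ T') ⊆ {C} := by
      intro v hv
      rcases Finset.mem_insert.1 (Finset.mem_inter.1 hv).1 with h | h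
      · exact absurd (h ▸ hv) hAn
      · exact h
    have : p ∈ hull {C} := hull_mono hsub hinter
    rw [hull_singleton] at this
    exact absurd (Set.mem_singleton_iff.1 this).symm (hnl C)
  have hCmem : C ∈ ({A, C} : Finset (ℤ × ℤ)) ∩ (T ∩ T') := by
    by_contra hCn
    have hsub : ({A, C} : Finset (ℤ × ℤ)) ∩ (T ∩ T') ⊆ {A} := by
      intro v hv
      rcases Finset.mem_insert.1 (Finset.mem_inter.1 hv).1 with h | h
      · exact Finset.mem_singleton.2 h
      · exact absurd ((Finset.mem_singleton.1 h) ▸ hv) hCn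
    have : p ∈ hull {A} := hull_mono hsub hinter
    rw [hull_singleton] at this
    exact absurd (Set.mem_singleton_iff.1 this).symm (hnl A)
  exact ⟨(Finset.mem_inter.1 (Finset.mem_inter.1 hAmem).2).2,
    (Finset.mem_inter.1 (Finset.mem_inter.1 hCmem).2).2⟩

/-- Two edges of the same triangulation with the same midpoint coincide. -/
lemma mid_unique (𝒯 : UnimodularTriangulation R) {T T' : Finset (ℤ × ℤ)}
    (hT : T ∈ 𝒯.tris) (hT' : T' ∈ 𝒯.tris) {A C A' C' : ℤ × ℤ}
    (hA : A ∈ T) (hC : C ∈ T) (hAC : A ≠ C)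
    (hA' : A' ∈ T') (hC' : C' ∈ T') (hA'C' : A' ≠ C')
    (hmid : A + C = A' + C') : ({A, C} : Finset (ℤ × ℤ)) = {A', C'} := by
  set p : Pt := (1/2 : ℝ) • toPt A + (1/2 : ℝ) • toPt C with hp_def
  have hp : p ∈ hull {A, C} :=
    mem_hull_pair hAC (by norm_num) (by norm_num) (by norm_num)
  have hPsum : toPt A + toPt C = toPt A' + toPt C' := by
    have := congrArg toPt hmid
    rw [toPt_add, toPt_add] at this; exact this
  have hp_def' : p = (1/2 : ℝ) • toPt A' + (1/2 : ℝ) • toPt C' := by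
    rw [hp_def, ← smul_add, hPsum, smul_add]
  have hp' : p ∈ hull {A', C'} := by
    rw [hp_def']
    exact mem_hull_pair hA'C' (by norm_num) (by norm_num) (by norm_num)
  have hnl : ∀ v : ℤ × ℤ, toPt v ≠ p := by
    intro v hv
    apply not_both_even 𝒯 hT hA hC hAC
    have h1 : (v.1 : ℝ) = (1/2) * (A.1 : ℝ) + (1/2) * (C.1 : ℝ) := by
      have := congrArg Prod.fst hv
      simpa [toPt, hp_def, smul_eq_mul] using this
    have h2 : (v.2 : ℝ) = (1/2) * (A.2 : ℝ) + (1/2) * (C.2 : ℝ) := by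
      have := congrArg Prod.snd hv
      simpa [toPt, hp_def, smul_eq_mul] using this
    have h1' : 2 * v.1 = A.1 + C.1 := by
      have : 2 * (v.1 : ℝ) = (A.1 : ℝ) + C.1 := by linarith
      exact_mod_cast this
    have h2' : 2 * v.2 = A.2 + C.2 := by
      have : 2 * (v.2 : ℝ) = (A.2 : ℝ) + C.2 := by linarith
      exact_mod_cast this
    exact ⟨⟨v.1 - A.1, by omega⟩, ⟨v.2 - A.2, by omega⟩⟩
  have hpT' : p ∈ hull T' := by
    refine hull_mono ?_ hp'
    intro v hv
    rcases Finset.mem_insert.1 hv with h | h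
    · rw [h]; exact hA'
    · rw [Finset.mem_singleton.1 h]; exact hC'
  obtain ⟨hAT', hCT'⟩ := pair_subset_other 𝒯 hT hT' hA hC hAC hp hnl hpT'
  obtain ⟨c0, hc0A', hc0C', hTeq'⟩ := third_elt (𝒯.card3 T' hT') hA' hC' hA'C'
  have hd : idet A' C' c0 ≠ 0 :=
    idet_ne_zero (uni_idet 𝒯 hT' hA' hC' (by rw [hTeq']; simp) hA'C' hc0A'.symm hc0C'.symm)
  have hs₁ : ({A, C} : Finset (ℤ × ℤ)) ⊆ {A', C', c0} := by
    intro v hv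
    rw [← hTeq']
    rcases Finset.mem_insert.1 hv with h | h
    · rw [h]; exact hAT'
    · rw [Finset.mem_singleton.1 h]; exact hCT'
  have hs₂ : ({A', C'} : Finset (ℤ × ℤ)) ⊆ {A', C', c0} := by
    intro v hv
    rcases Finset.mem_insert.1 hv with h | h
    · rw [h]; simp
    · rw [Finset.mem_singleton.1 h]; simp
  have hinter := mem_hull_inter hA'C' hc0A'.symm hc0C'.symm hd hs₁ hs₂ hp hp'
  have hAin : A ∈ ({A, C} : Finset (ℤ × ℤ)) ∩ {A', C'} := by
    by_contra hAn
    have hsub : ({A, C} : Finset (ℤ × ℤ)) ∩ {A', C'} ⊆ {C} := by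
      intro v hv
      rcases Finset.mem_insert.1 (Finset.mem_inter.1 hv).1 with h | h
      · exact absurd (h ▸ hv) hAn
      · exact h
    have := hull_mono hsub hinter
    rw [hull_singleton] at this
    exact absurd (Set.mem_singleton_iff.1 this).symm (hnl C)
  have hCin : C ∈ ({A, C} : Finset (ℤ × ℤ)) ∩ {A', C'} := by
    by_contra hCn
    have hsub : ({A, C} : Finset (ℤ × ℤ)) ∩ {A', C'} ⊆ {A} := by
      intro v hv
      rcases Finset.mem_insert.1 (Finset.mem_inter.1 hv).1 with h | h
      · exact Finset.mem_singleton.2 h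
      · exact absurd ((Finset.mem_singleton.1 h) ▸ hv) hCn
    have := hull_mono hsub hinter
    rw [hull_singleton] at this
    exact absurd (Set.mem_singleton_iff.1 this).symm (hnl A)
  have hsub : ({A, C} : Finset (ℤ × ℤ)) ⊆ {A', C'} := by
    intro v hv
    rcases Finset.mem_insert.1 hv with h | h
    · rw [h]; exact (Finset.mem_inter.1 hAin).2
    · rw [Finset.mem_singleton.1 h]; exact (Finset.mem_inter.1 hCin).2
  apply Finset.eq_of_subset_of_card_le hsub
  rw [Finset.card_pair hAC, Finset.card_pair hA'C']

/-- If a point of a triangle has all barycentric weights positive, we may move it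
slightly downwards staying in the triangle. -/
lemma perturb {a b c : ℤ × ℤ} (hab : a ≠ b) (hac : a ≠ c) (hbc : b ≠ c)
    (hd : idet a b c ≠ 0) {p : Pt} {w : (ℤ × ℤ) → ℝ}
    (hw1 : w a + w b + w c = 1)
    (hwc : w a • toPt a + w b • toPt b + w c • toPt c = p)
    (hpa : 0 < w a) (hpb : 0 < w b) (hpc : 0 < w c) :
    ∃ δ : ℝ, 0 < δ ∧ ((p.1, p.2 - δ) : Pt) ∈ hull {a, b, c} := by
  set D : ℝ := ((idet a b c : ℤ) : ℝ) with hD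
  have hD0 : D ≠ 0 := by rw [hD]; exact_mod_cast hd
  have hDe : D = ((b.1 : ℝ) - a.1) * ((c.2 : ℝ) - a.2)
      - ((c.1 : ℝ) - a.1) * ((b.2 : ℝ) - a.2) := by
    rw [hD]; simp only [idet]; push_cast; ring
  set dβ : ℝ := ((c.1 : ℝ) - a.1) / D with hdβ
  set dγ : ℝ := -(((b.1 : ℝ) - a.1) / D) with hdγ
  set dα : ℝ := -dβ - dγ with hdα
  set δ : ℝ := min (min (w a / (|dα| + 1)) (w b / (|dβ| + 1))) (w c / (|dγ| + 1)) with hδ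
  have hδpos : 0 < δ := by
    apply lt_min (lt_min _ _) <;> try positivity
  have key : ∀ u dd : ℝ, 0 < u → δ ≤ u / (|dd| + 1) → 0 ≤ u + δ * dd := by
    intro u dd hu hle
    have h1 : δ * |dd| ≤ (u / (|dd| + 1)) * |dd| :=
      mul_le_mul_of_nonneg_right hle (abs_nonneg _)
    have h2 : (u / (|dd| + 1)) * |dd| ≤ u := by
      rw [div_mul_eq_mul_div, div_le_iff₀ (by positivity)]
      nlinarith [abs_nonneg dd]
    nlinarith [neg_abs_le dd, abs_nonneg dd, hδpos.le]
  have hwa' : 0 ≤ w a + δ * dα := key _ _ hpa (le_trans (min_le_left _ _) (min_le_left _ _))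
  have hwb' : 0 ≤ w b + δ * dβ := key _ _ hpb (le_trans (min_le_left _ _) (min_le_right _ _))
  have hwc' : 0 ≤ w c + δ * dγ := key _ _ hpc (min_le_right _ _)
  have hsum' : (w a + δ * dα) + (w b + δ * dβ) + (w c + δ * dγ) = 1 := by
    have h0 : dα + dβ + dγ = 0 := by rw [hdα]; ring
    calc (w a + δ * dα) + (w b + δ * dβ) + (w c + δ * dγ)
        = (w a + w b + w c) + δ * (dα + dβ + dγ) := by ring
      _ = 1 := by rw [hw1, h0]; ring
  refine ⟨δ, hδpos, ?_⟩
  have hmem := mem_hull_triple hab hac hbc hwa' hwb' hwc' hsum'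
  have hx := congrArg Prod.fst hwc
  have hy := congrArg Prod.snd hwc
  simp only [toPt, Prod.fst_add, Prod.snd_add, Prod.smul_mk, smul_eq_mul] at hx hy
  have hdx : dα * (a.1 : ℝ) + dβ * (b.1 : ℝ) + dγ * (c.1 : ℝ) = 0 := by
    rw [hdα, hdβ, hdγ]; field_simp; ring
  have hdy : dα * (a.2 : ℝ) + dβ * (b.2 : ℝ) + dγ * (c.2 : ℝ) = -1 := by
    rw [hdα, hdβ, hdγ]
    field_simp
    linear_combination hDe
  have heq : ((p.1, p.2 - δ) : Pt)
      = (w a + δ * dα) • toPt a + (w b + δ * dβ) • toPt b + (w c + δ * dγ) • toPt c := by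
    apply Prod.ext
    · simp only [toPt, Prod.fst_add, Prod.smul_mk, smul_eq_mul]
      rw [← hx]
      linear_combination -δ * hdx
    · simp only [toPt, Prod.snd_add, Prod.smul_mk, smul_eq_mul]
      rw [← hy]
      linear_combination -δ * hdy
  rw [heq]
  exact hmem

lemma pair_of_weights {A C : ℤ × ℤ} (hAC : A ≠ C) {x0 y0 wA wC : ℝ}
    (hx0 : ∀ k : ℤ, (k : ℝ) ≠ x0) (h1 : wA + wC = 1) (h0A : 0 ≤ wA) (h0C : 0 ≤ wC)
    (hcombo : wA • toPt A + wC • toPt C = ((x0, y0) : Pt)) :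
    ∃ A' C' : ℤ × ℤ, ((A' = A ∧ C' = C) ∨ (A' = C ∧ C' = A)) ∧ A'.1 < C'.1 ∧
      ∃ t : ℝ, 0 < t ∧ t < 1 ∧ (1 - t) • toPt A' + t • toPt C' = ((x0, y0) : Pt) := by
  have hx := congrArg Prod.fst hcombo
  simp only [toPt, Prod.fst_add, Prod.smul_mk, smul_eq_mul] at hx
  have hwA0 : wA ≠ 0 := by
    intro h
    rw [h] at h1 hx
    apply hx0 C.1
    rw [show wC = 1 by linarith] at hx
    linear_combination hx
  have hwC0 : wC ≠ 0 := by
    intro h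
    rw [h] at h1 hx
    apply hx0 A.1
    rw [show wA = 1 by linarith] at hx
    linear_combination hx
  have hwA : 0 < wA := lt_of_le_of_ne h0A (Ne.symm hwA0)
  have hwC : 0 < wC := lt_of_le_of_ne h0C (Ne.symm hwC0)
  have hne1 : A.1 ≠ C.1 := by
    intro h
    apply hx0 A.1
    rw [← hx, h]
    linear_combination (-(C.1 : ℝ)) * h1
  rcases lt_or_gt_of_ne hne1 with hlt | hgt
  · exact ⟨A, C, Or.inl ⟨rfl, rfl⟩, hlt, wC, hwC, by linarith, by
      rw [show (1 : ℝ) - wC = wA by linarith]; exact hcombo⟩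
  · exact ⟨C, A, Or.inr ⟨rfl, rfl⟩, hgt, wA, hwA, by linarith, by
      rw [show (1 : ℝ) - wA = wC by linarith, add_comm]; exact hcombo⟩

/-- The "fiber-minimal" point of a triangle over a non-integer abscissa lies on an edge
with strictly increasing `x`-coordinates. -/
lemma bottom_edge {a b c : ℤ × ℤ} (hab : a ≠ b) (hac : a ≠ c) (hbc : b ≠ c)
    (hd : idet a b c ≠ 0) {x0 y0 : ℝ} (hx0 : ∀ k : ℤ, (k : ℝ) ≠ x0)
    (hp : ((x0, y0) : Pt) ∈ hull {a, b, c})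
    (hmin : ∀ y : ℝ, ((x0, y) : Pt) ∈ hull {a, b, c} → y0 ≤ y) :
    ∃ A C : ℤ × ℤ, A ∈ ({a, b, c} : Finset (ℤ × ℤ)) ∧ C ∈ ({a, b, c} : Finset (ℤ × ℤ)) ∧
      A.1 < C.1 ∧ ∃ t : ℝ, 0 < t ∧ t < 1 ∧
      (1 - t) • toPt A + t • toPt C = ((x0, y0) : Pt) := by
  obtain ⟨w, hw0, hw1, hwc⟩ := mem_hull_iff.1 hp
  rw [sum3 hab hac hbc] at hw1
  rw [sum3 hab hac hbc (g := fun v => w v • toPt v)] at hwc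
  have hwa0 : 0 ≤ w a := hw0 a (by simp)
  have hwb0 : 0 ≤ w b := hw0 b (by simp)
  have hwc0 : 0 ≤ w c := hw0 c (by simp)
  by_cases hza : w a = 0
  · -- pair (b, c)
    have hcombo : w b • toPt b + w c • toPt c = ((x0, y0) : Pt) := by
      rw [← hwc, hza]; simp
    obtain ⟨A, C, hor, hlt, t, ht0, ht1, hteq⟩ :=
      pair_of_weights hbc hx0 (by linarith) hwb0 hwc0 hcombo
    refine ⟨A, C, ?_, ?_, hlt, t, ht0, ht1, hteq⟩
    · rcases hor with ⟨h, _⟩ | ⟨h, _⟩ <;> rw [h] <;> simp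
    · rcases hor with ⟨_, h⟩ | ⟨_, h⟩ <;> rw [h] <;> simp
  by_cases hzb : w b = 0
  · have hcombo : w a • toPt a + w c • toPt c = ((x0, y0) : Pt) := by
      rw [← hwc, hzb]; simp
    obtain ⟨A, C, hor, hlt, t, ht0, ht1, hteq⟩ :=
      pair_of_weights hac hx0 (by linarith) hwa0 hwc0 hcombo
    refine ⟨A, C, ?_, ?_, hlt, t, ht0, ht1, hteq⟩
    · rcases hor with ⟨h, _⟩ | ⟨h, _⟩ <;> rw [h] <;> simp
    · rcases hor with ⟨_, h⟩ | ⟨_, h⟩ <;> rw [h] <;> simp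
  by_cases hzc : w c = 0
  · have hcombo : w a • toPt a + w b • toPt b = ((x0, y0) : Pt) := by
      rw [← hwc, hzc]; simp
    obtain ⟨A, C, hor, hlt, t, ht0, ht1, hteq⟩ :=
      pair_of_weights hab hx0 (by linarith) hwa0 hwb0 hcombo
    refine ⟨A, C, ?_, ?_, hlt, t, ht0, ht1, hteq⟩
    · rcases hor with ⟨h, _⟩ | ⟨h, _⟩ <;> rw [h] <;> simp
    · rcases hor with ⟨_, h⟩ | ⟨_, h⟩ <;> rw [h] <;> simp
  · exfalso
    obtain ⟨δ, hδ, hmem⟩ := perturb hab hac hbc hd hw1 hwc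
      (lt_of_le_of_ne hwa0 (Ne.symm hza)) (lt_of_le_of_ne hwb0 (Ne.symm hzb))
      (lt_of_le_of_ne hwc0 (Ne.symm hzc))
    have := hmin (y0 - δ) hmem
    linarith

section Level

variable (ℓ : Pt →ₗ[ℝ] ℝ)

lemma hull_apply_eq {s : Finset (ℤ × ℤ)} {p : Pt} {w : (ℤ × ℤ) → ℝ}
    (hwc : ∑ v ∈ s, w v • toPt v = p) : ℓ p = ∑ v ∈ s, w v * ℓ (toPt v) := by
  rw [← hwc, map_sum]
  exact Finset.sum_congr rfl (fun v _ => by rw [map_smul, smul_eq_mul])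

lemma hull_le_level {s : Finset (ℤ × ℤ)} {c : ℝ} (hs : ∀ v ∈ s, ℓ (toPt v) ≤ c)
    {p : Pt} (hp : p ∈ hull s) : ℓ p ≤ c := by
  obtain ⟨w, hw0, hw1, hwc⟩ := mem_hull_iff.1 hp
  rw [hull_apply_eq ℓ hwc]
  calc ∑ v ∈ s, w v * ℓ (toPt v) ≤ ∑ v ∈ s, w v * c :=
        Finset.sum_le_sum (fun v hv => mul_le_mul_of_nonneg_left (hs v hv) (hw0 v hv))
    _ = c := by rw [← Finset.sum_mul, hw1, one_mul]

lemma hull_ge_level {s : Finset (ℤ × ℤ)} {c : ℝ} (hs : ∀ v ∈ s, c ≤ ℓ (toPt v))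
    {p : Pt} (hp : p ∈ hull s) : c ≤ ℓ p := by
  obtain ⟨w, hw0, hw1, hwc⟩ := mem_hull_iff.1 hp
  rw [hull_apply_eq ℓ hwc]
  calc (c : ℝ) = ∑ v ∈ s, w v * c := by rw [← Finset.sum_mul, hw1, one_mul]
    _ ≤ ∑ v ∈ s, w v * ℓ (toPt v) :=
        Finset.sum_le_sum (fun v hv => mul_le_mul_of_nonneg_left (hs v hv) (hw0 v hv))

lemma hull_level_filter_le {s : Finset (ℤ × ℤ)} {c : ℝ} (hs : ∀ v ∈ s, ℓ (toPt v) ≤ c)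
    {p : Pt} (hp : p ∈ hull s) (hpc : ℓ p = c) :
    p ∈ hull (s.filter (fun v => ℓ (toPt v) = c)) := by
  classical
  obtain ⟨w, hw0, hw1, hwc⟩ := mem_hull_iff.1 hp
  have hsumzero : ∑ u ∈ s, w u * (c - ℓ (toPt u)) = 0 := by
    have h1 : ∑ u ∈ s, w u * ℓ (toPt u) = c := by rw [← hull_apply_eq ℓ hwc, hpc]
    have h2 : ∑ u ∈ s, w u * (c - ℓ (toPt u))
        = (∑ u ∈ s, w u) * c - ∑ u ∈ s, w u * ℓ (toPt u) := by
      rw [Finset.sum_mul, ← Finset.sum_sub_distrib]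
      exact Finset.sum_congr rfl (fun v _ => by ring)
    rw [h2, hw1, h1]; ring
  have hzero : ∀ v ∈ s, w v ≠ 0 → ℓ (toPt v) = c := by
    intro v hv hwv
    by_contra hvne
    have hterm : 0 < w v * (c - ℓ (toPt v)) :=
      mul_pos (lt_of_le_of_ne (hw0 v hv) (Ne.symm hwv))
        (sub_pos.2 (lt_of_le_of_ne (hs v hv) hvne))
    have hle : w v * (c - ℓ (toPt v)) ≤ ∑ u ∈ s, w u * (c - ℓ (toPt u)) :=
      Finset.single_le_sum (fun u hu => mul_nonneg (hw0 u hu) (sub_nonneg.2 (hs u hu))) hv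
    rw [hsumzero] at hle
    linarith
  rw [mem_hull_iff]
  refine ⟨w, fun v hv => hw0 v (Finset.mem_filter.1 hv).1, ?_, ?_⟩
  · rw [Finset.sum_filter_of_ne (fun v hv h => hzero v hv h)]
    exact hw1
  · rw [Finset.sum_filter_of_ne (fun v hv h => hzero v hv (by
      intro h0; rw [h0] at h; simp at h))]
    exact hwc

lemma hull_level_filter_ge {s : Finset (ℤ × ℤ)} {c : ℝ} (hs : ∀ v ∈ s, c ≤ ℓ (toPt v))
    {p : Pt} (hp : p ∈ hull s) (hpc : ℓ p = c) :
    p ∈ hull (s.filter (fun v => ℓ (toPt v) = c)) := by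
  classical
  obtain ⟨w, hw0, hw1, hwc⟩ := mem_hull_iff.1 hp
  have hsumzero : ∑ u ∈ s, w u * (ℓ (toPt u) - c) = 0 := by
    have h1 : ∑ u ∈ s, w u * ℓ (toPt u) = c := by rw [← hull_apply_eq ℓ hwc, hpc]
    have h2 : ∑ u ∈ s, w u * (ℓ (toPt u) - c)
        = (∑ u ∈ s, w u * ℓ (toPt u)) - (∑ u ∈ s, w u) * c := by
      rw [Finset.sum_mul, ← Finset.sum_sub_distrib]
      exact Finset.sum_congr rfl (fun v _ => by ring)
    rw [h2, hw1, h1]; ring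
  have hzero : ∀ v ∈ s, w v ≠ 0 → ℓ (toPt v) = c := by
    intro v hv hwv
    by_contra hvne
    have hterm : 0 < w v * (ℓ (toPt v) - c) :=
      mul_pos (lt_of_le_of_ne (hw0 v hv) (Ne.symm hwv))
        (sub_pos.2 (lt_of_le_of_ne (hs v hv) (Ne.symm hvne)))
    have hle : w v * (ℓ (toPt v) - c) ≤ ∑ u ∈ s, w u * (ℓ (toPt u) - c) :=
      Finset.single_le_sum (fun u hu => mul_nonneg (hw0 u hu) (sub_nonneg.2 (hs u hu))) hv
    rw [hsumzero] at hle
    linarith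
  rw [mem_hull_iff]
  refine ⟨w, fun v hv => hw0 v (Finset.mem_filter.1 hv).1, ?_, ?_⟩
  · rw [Finset.sum_filter_of_ne (fun v hv h => hzero v hv h)]
    exact hw1
  · rw [Finset.sum_filter_of_ne (fun v hv h => hzero v hv (by
      intro h0; rw [h0] at h; simp at h))]
    exact hwc

/-- The main gluing criterion: two finite sets separated by a hyperplane glue along it. -/
lemma glue_of_separated {S S' : Finset (ℤ × ℤ)} {c : ℝ}
    (hS : ∀ v ∈ S, ℓ (toPt v) ≤ c) (hS' : ∀ v ∈ S', c ≤ ℓ (toPt v))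
    (h1 : hull (S.filter fun v => ℓ (toPt v) = c) ∩ hull (S'.filter fun v => ℓ (toPt v) = c)
        ⊆ hull (S ∩ S')) :
    hull S ∩ hull S' = hull (S ∩ S') := by
  apply Set.Subset.antisymm
  · rintro p ⟨hp, hp'⟩
    have hpc : ℓ p = c := le_antisymm (hull_le_level ℓ hS hp) (hull_ge_level ℓ hS' hp')
    exact h1 ⟨hull_level_filter_le ℓ hS hp hpc, hull_level_filter_ge ℓ hS' hp' hpc⟩
  · intro p hp
    exact ⟨hull_mono Finset.inter_subset_left hp, hull_mono Finset.inter_subset_right hp⟩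

end Level

/-! ### Lattice intervals on rows and columns -/

def rowF (k lo hi : ℤ) : Finset (ℤ × ℤ) := (Finset.Icc lo hi).image (fun t => (t, k))

def colF (k lo hi : ℤ) : Finset (ℤ × ℤ) := (Finset.Icc lo hi).image (fun t => (k, t))

lemma mem_rowF {k lo hi : ℤ} {v : ℤ × ℤ} :
    v ∈ rowF k lo hi ↔ lo ≤ v.1 ∧ v.1 ≤ hi ∧ v.2 = k := by
  simp only [rowF, Finset.mem_image, Finset.mem_Icc]
  constructor
  · rintro ⟨t, ⟨h1, h2⟩, rfl⟩; exact ⟨h1, h2, rfl⟩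
  · rintro ⟨h1, h2, h3⟩; exact ⟨v.1, ⟨h1, h2⟩, by rw [← h3]⟩

lemma mem_colF {k lo hi : ℤ} {v : ℤ × ℤ} :
    v ∈ colF k lo hi ↔ lo ≤ v.2 ∧ v.2 ≤ hi ∧ v.1 = k := by
  simp only [colF, Finset.mem_image, Finset.mem_Icc]
  constructor
  · rintro ⟨t, ⟨h1, h2⟩, rfl⟩; exact ⟨h1, h2, rfl⟩
  · rintro ⟨h1, h2, h3⟩; exact ⟨v.2, ⟨h1, h2⟩, by rw [← h3]⟩

lemma hull_row_inter {k lo hi lo' hi' : ℤ} {p : Pt}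
    (hp : p ∈ hull (rowF k lo hi)) (hp' : p ∈ hull (rowF k lo' hi')) :
    p ∈ hull (rowF k lo hi ∩ rowF k lo' hi') := by
  have hsnd : p.2 = (k : ℝ) := by
    have h1 := hull_le_level (LinearMap.snd ℝ ℝ ℝ)
      (s := rowF k lo hi) (c := (k : ℝ))
      (fun v hv => by
        simp only [toPt, LinearMap.snd_apply]
        rw [(mem_rowF.1 hv).2.2]) hp
    have h2 := hull_ge_level (LinearMap.snd ℝ ℝ ℝ)
      (s := rowF k lo hi) (c := (k : ℝ))
      (fun v hv => by
        simp only [toPt, LinearMap.snd_apply]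
        rw [(mem_rowF.1 hv).2.2]) hp
    simp only [LinearMap.snd_apply] at h1 h2
    linarith
  have hxlo : (lo : ℝ) ≤ p.1 := by
    have := hull_ge_level (LinearMap.fst ℝ ℝ ℝ) (s := rowF k lo hi) (c := (lo : ℝ))
      (fun v hv => by simp only [toPt, LinearMap.fst_apply]; exact_mod_cast (mem_rowF.1 hv).1) hp
    simpa using this
  have hxhi : p.1 ≤ (hi : ℝ) := by
    have := hull_le_level (LinearMap.fst ℝ ℝ ℝ) (s := rowF k lo hi) (c := (hi : ℝ))
      (fun v hv => by simp only [toPt, LinearMap.fst_apply]; exact_mod_cast (mem_rowF.1 hv).2.1) hp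
    simpa using this
  have hxlo' : (lo' : ℝ) ≤ p.1 := by
    have := hull_ge_level (LinearMap.fst ℝ ℝ ℝ) (s := rowF k lo' hi') (c := (lo' : ℝ))
      (fun v hv => by simp only [toPt, LinearMap.fst_apply]; exact_mod_cast (mem_rowF.1 hv).1) hp'
    simpa using this
  have hxhi' : p.1 ≤ (hi' : ℝ) := by
    have := hull_le_level (LinearMap.fst ℝ ℝ ℝ) (s := rowF k lo' hi') (c := (hi' : ℝ))
      (fun v hv => by simp only [toPt, LinearMap.fst_apply]; exact_mod_cast (mem_rowF.1 hv).2.1) hp'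
    simpa using this
  set L : ℤ := max lo lo' with hL
  set H : ℤ := min hi hi' with hH
  have hLr : (L : ℝ) ≤ p.1 := by
    rw [hL]; push_cast; exact max_le hxlo hxlo'
  have hHr : p.1 ≤ (H : ℝ) := by
    rw [hH]; push_cast; exact le_min hxhi hxhi'
  have hLH : L ≤ H := by exact_mod_cast le_trans hLr hHr
  have hmemL : ((L, k) : ℤ × ℤ) ∈ rowF k lo hi ∩ rowF k lo' hi' := by
    rw [Finset.mem_inter, mem_rowF, mem_rowF]
    constructor
    · exact ⟨le_max_left _ _, le_trans hLH (min_le_left _ _), rfl⟩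
    · exact ⟨le_max_right _ _, le_trans hLH (min_le_right _ _), rfl⟩
  have hmemH : ((H, k) : ℤ × ℤ) ∈ rowF k lo hi ∩ rowF k lo' hi' := by
    rw [Finset.mem_inter, mem_rowF, mem_rowF]
    constructor
    · exact ⟨le_trans (le_max_left _ _) hLH, min_le_left _ _, rfl⟩
    · exact ⟨le_trans (le_max_right _ _) hLH, min_le_right _ _, rfl⟩
  rcases eq_or_lt_of_le hLH with heq | hlt
  · have hLH' : (L : ℝ) = (H : ℝ) := by exact_mod_cast heq
    have hp1 : p.1 = (L : ℝ) := le_antisymm (by linarith) hLr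
    have hpL : p = toPt (L, k) := by
      rw [Prod.ext_iff]
      exact ⟨by simpa [toPt] using hp1, by simpa [toPt] using hsnd⟩
    rw [hpL]
    exact mem_hull_self hmemL
  · have hne : ((L, k) : ℤ × ℤ) ≠ (H, k) := by
      intro h; rw [Prod.ext_iff] at h; omega
    set t : ℝ := (p.1 - L) / (H - L) with ht
    have hHL : (0 : ℝ) < (H : ℝ) - L := by
      have : (L : ℝ) < H := by exact_mod_cast hlt
      linarith
    have ht0 : 0 ≤ t := div_nonneg (by linarith) hHL.le
    have ht1 : t ≤ 1 := by
      rw [ht, div_le_one hHL]; linarith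
    have hHL0 : (H : ℝ) - L ≠ 0 := ne_of_gt hHL
    have htmul : t * ((H : ℝ) - L) = p.1 - L := by
      rw [ht]; field_simp
    have hcombo : (1 - t) • toPt (L, k) + t • toPt (H, k) = p := by
      rw [Prod.ext_iff]
      constructor
      · simp only [toPt, Prod.fst_add, Prod.smul_mk, smul_eq_mul]
        linear_combination htmul
      · simp only [toPt, Prod.snd_add, Prod.smul_mk, smul_eq_mul]
        rw [hsnd]; ring
    have hpmem : p ∈ hull ({(L, k), (H, k)} : Finset (ℤ × ℤ)) := by
      rw [← hcombo]
      exact mem_hull_pair hne (by linarith) ht0 (by ring)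
    refine hull_mono ?_ hpmem
    intro v hv
    rcases Finset.mem_insert.1 hv with h | h
    · rw [h]; exact hmemL
    · rw [Finset.mem_singleton.1 h]; exact hmemH

lemma mem_hull_swap_of {s : Finset (ℤ × ℤ)} {p : Pt} (h : p ∈ hull s) :
    ((p.2, p.1) : Pt) ∈ hull (s.image (fun v => (v.2, v.1))) := by
  classical
  obtain ⟨w, hw0, hw1, hwc⟩ := mem_hull_iff.1 h
  have hinj : ∀ x ∈ s, ∀ y ∈ s, (fun v : ℤ × ℤ => (v.2, v.1)) x = (fun v : ℤ × ℤ => (v.2, v.1)) y → x = y := by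
    intro x _ y _ hxy
    simp only [Prod.ext_iff] at hxy ⊢
    exact ⟨hxy.2, hxy.1⟩
  rw [mem_hull_iff]
  refine ⟨fun u => w (u.2, u.1), ?_, ?_, ?_⟩
  · intro u hu
    obtain ⟨v, hv, rfl⟩ := Finset.mem_image.1 hu
    simpa using hw0 v hv
  · rw [Finset.sum_image hinj]
    simpa using hw1
  · rw [Finset.sum_image hinj]
    have hfst := congrArg Prod.fst hwc
    have hsnd := congrArg Prod.snd hwc
    rw [Prod.fst_sum] at hfst
    rw [Prod.snd_sum] at hsnd
    apply Prod.ext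
    · rw [Prod.fst_sum]
      simp only [toPt, Prod.smul_mk, smul_eq_mul] at hsnd ⊢
      simpa using hsnd
    · rw [Prod.snd_sum]
      simp only [toPt, Prod.smul_mk, smul_eq_mul] at hfst ⊢
      simpa using hfst

lemma colF_eq_image (k lo hi : ℤ) :
    colF k lo hi = (rowF k lo hi).image (fun v => (v.2, v.1)) := by
  ext v
  simp only [Finset.mem_image]
  rw [mem_colF]
  constructor
  · rintro ⟨h1, h2, h3⟩
    exact ⟨(v.2, v.1), mem_rowF.2 ⟨h1, h2, h3⟩, rfl⟩
  · rintro ⟨u, hu, rfl⟩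
    obtain ⟨h1, h2, h3⟩ := mem_rowF.1 hu
    exact ⟨h1, h2, h3⟩

lemma hull_col_inter {k lo hi lo' hi' : ℤ} {p : Pt}
    (hp : p ∈ hull (colF k lo hi)) (hp' : p ∈ hull (colF k lo' hi')) :
    p ∈ hull (colF k lo hi ∩ colF k lo' hi') := by
  have hswap : ∀ (lo₀ hi₀ : ℤ), (colF k lo₀ hi₀).image (fun v : ℤ × ℤ => (v.2, v.1)) = rowF k lo₀ hi₀ := by
    intro lo₀ hi₀
    rw [colF_eq_image]
    rw [Finset.image_image]
    have : ((fun v : ℤ × ℤ => (v.2, v.1)) ∘ (fun v : ℤ × ℤ => (v.2, v.1))) = id := by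
      funext v; simp
    rw [this, Finset.image_id]
  have h1 : ((p.2, p.1) : Pt) ∈ hull (rowF k lo hi) := by
    have := mem_hull_swap_of hp
    rwa [hswap] at this
  have h2 : ((p.2, p.1) : Pt) ∈ hull (rowF k lo' hi') := by
    have := mem_hull_swap_of hp'
    rwa [hswap] at this
  have h3 := hull_row_inter h1 h2
  have h4 := mem_hull_swap_of h3
  have himg : (rowF k lo hi ∩ rowF k lo' hi').image (fun v : ℤ × ℤ => (v.2, v.1))
      = colF k lo hi ∩ colF k lo' hi' := by
    rw [Finset.image_inter _ _ (fun x y hxy => by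
      simp only [Prod.ext_iff] at hxy ⊢; exact ⟨hxy.2, hxy.1⟩)]
    rw [colF_eq_image, colF_eq_image]
  rw [himg] at h4
  simpa using h4

/-- Raw unimodular-triangle predicate. -/
def UniT (T : Finset (ℤ × ℤ)) : Prop :=
  T.card = 3 ∧ ∀ a ∈ T, ∀ b ∈ T, ∀ c ∈ T, a ≠ b → a ≠ c → b ≠ c → |idet a b c| = 1

lemma uniT_of_mem (𝒯 : UnimodularTriangulation R) {T : Finset (ℤ × ℤ)}
    (hT : T ∈ 𝒯.tris) : UniT T :=
  ⟨𝒯.card3 T hT, 𝒯.unimodular T hT⟩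

lemma row_step' {T : Finset (ℤ × ℤ)} (h : UniT T) {A C : ℤ × ℤ}
    (hA : A ∈ T) (hC : C ∈ T) (hAC : A ≠ C) (h2 : A.2 = C.2) :
    C.1 = A.1 + 1 ∨ C.1 = A.1 - 1 := by
  obtain ⟨c0, hc0A, hc0C, hTeq⟩ := third_elt h.1 hA hC hAC
  have habs := h.2 A hA C hC c0 (by rw [hTeq]; simp) hAC hc0A.symm hc0C.symm
  have heq : idet A C c0 = (C.1 - A.1) * (c0.2 - A.2) := by
    simp only [idet]; rw [← h2]; ring
  rw [heq] at habs
  rcases (abs_eq (by norm_num : (0:ℤ) ≤ 1)).1 (abs_mul_eq_one habs).1 with h | h <;> omega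

lemma col_step' {T : Finset (ℤ × ℤ)} (h : UniT T) {A C : ℤ × ℤ}
    (hA : A ∈ T) (hC : C ∈ T) (hAC : A ≠ C) (h1 : A.1 = C.1) :
    C.2 = A.2 + 1 ∨ C.2 = A.2 - 1 := by
  obtain ⟨c0, hc0A, hc0C, hTeq⟩ := third_elt h.1 hA hC hAC
  have habs := h.2 A hA C hC c0 (by rw [hTeq]; simp) hAC hc0A.symm hc0C.symm
  have heq : idet A C c0 = -((c0.1 - A.1) * (C.2 - A.2)) := by
    simp only [idet]; rw [← h1]; ring
  rw [heq, abs_neg] at habs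
  rcases (abs_eq (by norm_num : (0:ℤ) ≤ 1)).1 (abs_mul_eq_one habs).2 with h | h <;> omega

lemma level_row_ivl {T : Finset (ℤ × ℤ)} (h : UniT T) (k : ℤ) :
    ∃ lo hi : ℤ, T.filter (fun v => v.2 = k) = rowF k lo hi := by
  classical
  set X := T.filter (fun v => v.2 = k) with hX
  have hXT : X ⊆ T := Finset.filter_subset _ _
  have hXk : ∀ v ∈ X, v.2 = k := fun v hv => (Finset.mem_filter.1 hv).2
  by_cases h0 : X = ∅
  · refine ⟨0, -1, ?_⟩
    rw [h0]
    unfold rowF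
    rw [Finset.Icc_eq_empty (by omega)]
    simp
  obtain ⟨u, hu⟩ := Finset.nonempty_iff_ne_empty.2 h0
  by_cases h1 : ∀ v ∈ X, v = u
  · refine ⟨u.1, u.1, ?_⟩
    ext v
    rw [mem_rowF]
    constructor
    · intro hv
      rw [h1 v hv]
      exact ⟨le_rfl, le_rfl, hXk u hu⟩
    · rintro ⟨ha, hb, hc⟩
      have hv : v = u := Prod.ext (by omega) (by rw [hc, hXk u hu])
      rw [hv]; exact hu
  · push_neg at h1
    obtain ⟨v, hv, hvu⟩ := h1
    have key : ∀ U V : ℤ × ℤ, U ∈ X → V ∈ X → U ≠ V → V.1 = U.1 + 1 →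
        X = rowF k U.1 (U.1 + 1) := by
      intro U V hU hV hUV hV1
      ext w
      rw [mem_rowF]
      constructor
      · intro hw
        refine ⟨?_, ?_, hXk w hw⟩
        all_goals by_cases hwU : w = U
        case pos => rw [hwU]
        case pos => rw [hwU]; omega
        all_goals by_cases hwV : w = V
        case pos => rw [hwV]; omega
        case pos => rw [hwV]; omega
        all_goals exfalso
        all_goals have e1 := row_step' h (hXT hU) (hXT hw) (Ne.symm hwU) ((hXk U hU).trans (hXk w hw).symm)
        all_goals have e2 := row_step' h (hXT hV) (hXT hw) (Ne.symm hwV) ((hXk V hV).trans (hXk w hw).symm)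
        all_goals rcases e1 with e1 | e1 <;> rcases e2 with e2 | e2 <;> omega
      · rintro ⟨ha, hb, hc⟩
        have : w.1 = U.1 ∨ w.1 = U.1 + 1 := by omega
        rcases this with hcase | hcase
        · have hw : w = U := Prod.ext (by omega) (by rw [hc, hXk U hU])
          rw [hw]; exact hU
        · have hw : w = V := Prod.ext (by omega) (by rw [hc, hXk V hV])
          rw [hw]; exact hV
    have h2 : u.2 = v.2 := by rw [hXk u hu, hXk v hv]
    rcases row_step' h (hXT hu) (hXT hv) (Ne.symm hvu) h2 with hs | hs
    · exact ⟨u.1, u.1 + 1, key u v hu hv (Ne.symm hvu) hs⟩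
    · exact ⟨v.1, v.1 + 1, key v u hv hu hvu (by omega)⟩

lemma level_col_ivl {T : Finset (ℤ × ℤ)} (h : UniT T) (k : ℤ) :
    ∃ lo hi : ℤ, T.filter (fun v => v.1 = k) = colF k lo hi := by
  classical
  set X := T.filter (fun v => v.1 = k) with hX
  have hXT : X ⊆ T := Finset.filter_subset _ _
  have hXk : ∀ v ∈ X, v.1 = k := fun v hv => (Finset.mem_filter.1 hv).2
  by_cases h0 : X = ∅
  · refine ⟨0, -1, ?_⟩
    rw [h0]
    unfold colF
    rw [Finset.Icc_eq_empty (by omega)]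
    simp
  obtain ⟨u, hu⟩ := Finset.nonempty_iff_ne_empty.2 h0
  by_cases h1 : ∀ v ∈ X, v = u
  · refine ⟨u.2, u.2, ?_⟩
    ext v
    rw [mem_colF]
    constructor
    · intro hv
      rw [h1 v hv]
      exact ⟨le_rfl, le_rfl, hXk u hu⟩
    · rintro ⟨ha, hb, hc⟩
      have hv : v = u := Prod.ext (by rw [hc, hXk u hu]) (by omega)
      rw [hv]; exact hu
  · push_neg at h1
    obtain ⟨v, hv, hvu⟩ := h1
    have key : ∀ U V : ℤ × ℤ, U ∈ X → V ∈ X → U ≠ V → V.2 = U.2 + 1 →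
        X = colF k U.2 (U.2 + 1) := by
      intro U V hU hV hUV hV1
      ext w
      rw [mem_colF]
      constructor
      · intro hw
        refine ⟨?_, ?_, hXk w hw⟩
        all_goals by_cases hwU : w = U
        case pos => rw [hwU]
        case pos => rw [hwU]; omega
        all_goals by_cases hwV : w = V
        case pos => rw [hwV]; omega
        case pos => rw [hwV]; omega
        all_goals exfalso
        all_goals have e1 := col_step' h (hXT hU) (hXT hw) (Ne.symm hwU) ((hXk U hU).trans (hXk w hw).symm)
        all_goals have e2 := col_step' h (hXT hV) (hXT hw) (Ne.symm hwV) ((hXk V hV).trans (hXk w hw).symm)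
        all_goals rcases e1 with e1 | e1 <;> rcases e2 with e2 | e2 <;> omega
      · rintro ⟨ha, hb, hc⟩
        have : w.2 = U.2 ∨ w.2 = U.2 + 1 := by omega
        rcases this with hcase | hcase
        · have hw : w = U := Prod.ext (by rw [hc, hXk U hU]) (by omega)
          rw [hw]; exact hU
        · have hw : w = V := Prod.ext (by rw [hc, hXk V hV]) (by omega)
          rw [hw]; exact hV
    have h2 : u.1 = v.1 := by rw [hXk u hu, hXk v hv]
    rcases col_step' h (hXT hu) (hXT hv) (Ne.symm hvu) h2 with hs | hs
    · exact ⟨u.2, u.2 + 1, key u v hu hv (Ne.symm hvu) hs⟩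
    · exact ⟨v.2, v.2 + 1, key v u hv hu hvu (by omega)⟩

lemma glue_row_separated {T T' : Finset (ℤ × ℤ)} (h : UniT T) (h' : UniT T') {k : ℤ}
    (hS : ∀ v ∈ T, v.2 ≤ k) (hS' : ∀ v ∈ T', k ≤ v.2) :
    hull T ∩ hull T' = hull (T ∩ T') := by
  classical
  apply glue_of_separated (LinearMap.snd ℝ ℝ ℝ) (c := (k : ℝ))
  · intro v hv
    simp only [toPt, LinearMap.snd_apply]
    exact_mod_cast hS v hv
  · intro v hv
    simp only [toPt, LinearMap.snd_apply]
    exact_mod_cast hS' v hv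
  · have hf : ∀ S : Finset (ℤ × ℤ),
        (S.filter fun v => (LinearMap.snd ℝ ℝ ℝ) (toPt v) = (k : ℝ))
          = S.filter (fun v => v.2 = k) := by
      intro S
      apply Finset.filter_congr
      intro v _
      simp only [toPt, LinearMap.snd_apply]
      exact_mod_cast Iff.rfl
    rw [hf, hf]
    obtain ⟨lo, hi, he⟩ := level_row_ivl h k
    obtain ⟨lo', hi', he'⟩ := level_row_ivl h' k
    rw [he, he']
    intro p hp
    refine hull_mono ?_ (hull_row_inter hp.1 hp.2)
    intro v hv
    have h1 : v ∈ T.filter (fun v => v.2 = k) := by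
      rw [he]; exact (Finset.mem_inter.1 hv).1
    have h2 : v ∈ T'.filter (fun v => v.2 = k) := by
      rw [he']; exact (Finset.mem_inter.1 hv).2
    exact Finset.mem_inter.2 ⟨Finset.filter_subset _ _ h1, Finset.filter_subset _ _ h2⟩

lemma glue_col_separated {T T' : Finset (ℤ × ℤ)} (h : UniT T) (h' : UniT T') {k : ℤ}
    (hS : ∀ v ∈ T, v.1 ≤ k) (hS' : ∀ v ∈ T', k ≤ v.1) :
    hull T ∩ hull T' = hull (T ∩ T') := by
  classical
  apply glue_of_separated (LinearMap.fst ℝ ℝ ℝ) (c := (k : ℝ))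
  · intro v hv
    simp only [toPt, LinearMap.fst_apply]
    exact_mod_cast hS v hv
  · intro v hv
    simp only [toPt, LinearMap.fst_apply]
    exact_mod_cast hS' v hv
  · have hf : ∀ S : Finset (ℤ × ℤ),
        (S.filter fun v => (LinearMap.fst ℝ ℝ ℝ) (toPt v) = (k : ℝ))
          = S.filter (fun v => v.1 = k) := by
      intro S
      apply Finset.filter_congr
      intro v _
      simp only [toPt, LinearMap.fst_apply]
      exact_mod_cast Iff.rfl
    rw [hf, hf]
    obtain ⟨lo, hi, he⟩ := level_col_ivl h k
    obtain ⟨lo', hi', he'⟩ := level_col_ivl h' k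
    rw [he, he']
    intro p hp
    refine hull_mono ?_ (hull_col_inter hp.1 hp.2)
    intro v hv
    have h1 : v ∈ T.filter (fun v => v.1 = k) := by
      rw [he]; exact (Finset.mem_inter.1 hv).1
    have h2 : v ∈ T'.filter (fun v => v.1 = k) := by
      rw [he']; exact (Finset.mem_inter.1 hv).2
    exact Finset.mem_inter.2 ⟨Finset.filter_subset _ _ h1, Finset.filter_subset _ _ h2⟩

lemma UT_ext {R : Set Pt} {X Y : UnimodularTriangulation R} (h : X.tris = Y.tris) : X = Y := by
  cases X; cases Y; simp_all

instance UT_finite (m n : ℕ) : Finite (UnimodularTriangulation (gridRegion m n)) := by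
  classical
  let L : Finset (ℤ × ℤ) := Finset.Icc 0 (m : ℤ) ×ˢ Finset.Icc 0 (n : ℤ)
  have hmem : ∀ 𝒯 : UnimodularTriangulation (gridRegion m n),
      𝒯.tris ∈ L.powerset.powerset := by
    intro 𝒯
    rw [Finset.mem_powerset]
    intro T hT
    rw [Finset.mem_powerset]
    intro v hv
    obtain ⟨h1, h2, h3, h4⟩ := vert_mem_grid 𝒯 hT hv
    simp only [L, Finset.mem_product, Finset.mem_Icc]
    exact ⟨⟨h1, h2⟩, ⟨h3, h4⟩⟩
  apply Finite.of_injective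
    (fun 𝒯 => (⟨𝒯.tris, hmem 𝒯⟩ : {s // s ∈ L.powerset.powerset}))
  intro a b hab
  exact UT_ext (congrArg Subtype.val hab)

/-- Raw version: a unimodular triangle is not contained in a horizontal line. -/
lemma no_flat' {T : Finset (ℤ × ℤ)} (h : UniT T) {k : ℤ} (hflat : ∀ v ∈ T, v.2 = k) :
    False := by
  obtain ⟨a, b, c, hab, hac, hbc, hTeq⟩ := tri_present h.1
  have ha : a ∈ T := by rw [hTeq]; simp
  have hb : b ∈ T := by rw [hTeq]; simp
  have hc : c ∈ T := by rw [hTeq]; simp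
  have habs := h.2 a ha b hb c hc hab hac hbc
  have h0 : idet a b c = 0 := by
    simp only [idet]; rw [hflat a ha, hflat b hb, hflat c hc]; ring
  rw [h0] at habs; simp at habs

/-! ### Vertical shifts -/

def shiftv (k : ℤ) (v : ℤ × ℤ) : ℤ × ℤ := (v.1, v.2 + k)

lemma shiftv_inj (k : ℤ) : Function.Injective (shiftv k) := by
  intro a b h
  simp only [shiftv, Prod.ext_iff] at h ⊢
  omega

def shiftT (k : ℤ) (T : Finset (ℤ × ℤ)) : Finset (ℤ × ℤ) := T.image (shiftv k)

lemma mem_shiftT {k : ℤ} {T : Finset (ℤ × ℤ)} {v : ℤ × ℤ} :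
    v ∈ shiftT k T ↔ (v.1, v.2 - k) ∈ T := by
  simp only [shiftT, Finset.mem_image]
  constructor
  · rintro ⟨u, hu, rfl⟩
    simpa [shiftv] using hu
  · intro h
    exact ⟨(v.1, v.2 - k), h, by simp [shiftv]⟩

lemma toPt_shiftv (k : ℤ) (v : ℤ × ℤ) :
    toPt (shiftv k v) = toPt v + ((0 : ℝ), (k : ℝ)) := by
  simp only [toPt, shiftv, Prod.ext_iff, Prod.fst_add, Prod.snd_add]
  push_cast
  constructor <;> ring

lemma uniT_shift {k : ℤ} {T : Finset (ℤ × ℤ)} (h : UniT T) : UniT (shiftT k T) := by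
  constructor
  · rw [shiftT, Finset.card_image_of_injective _ (shiftv_inj k)]
    exact h.1
  · intro a ha b hb c hc hab hac hbc
    obtain ⟨a', ha', rfl⟩ := Finset.mem_image.1 ha
    obtain ⟨b', hb', rfl⟩ := Finset.mem_image.1 hb
    obtain ⟨c', hc', rfl⟩ := Finset.mem_image.1 hc
    have h1 : a' ≠ b' := fun hh => hab (by rw [hh])
    have h2 : a' ≠ c' := fun hh => hac (by rw [hh])
    have h3 : b' ≠ c' := fun hh => hbc (by rw [hh])
    have := h.2 a' ha' b' hb' c' hc' h1 h2 h3
    rw [show idet (shiftv k a') (shiftv k b') (shiftv k c') = idet a' b' c' from by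
      simp only [idet, shiftv]; ring]
    exact this

lemma mem_hull_shift_of {k : ℤ} {T : Finset (ℤ × ℤ)} {p : Pt} (h : p ∈ hull T) :
    ((p.1, p.2 + (k : ℝ)) : Pt) ∈ hull (shiftT k T) := by
  classical
  obtain ⟨w, hw0, hw1, hwc⟩ := mem_hull_iff.1 h
  have hinj : ∀ x ∈ T, ∀ y ∈ T, shiftv k x = shiftv k y → x = y :=
    fun x _ y _ hxy => shiftv_inj k hxy
  rw [mem_hull_iff]
  refine ⟨fun v => w (v.1, v.2 - k), ?_, ?_, ?_⟩
  · intro v hv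
    rw [mem_shiftT] at hv
    exact hw0 _ hv
  · rw [shiftT, Finset.sum_image hinj]
    simpa [shiftv] using hw1
  · rw [shiftT, Finset.sum_image hinj]
    have : ∀ u ∈ T, w ((shiftv k u).1, (shiftv k u).2 - k) • toPt (shiftv k u)
        = w u • toPt u + w u • ((0 : ℝ), (k : ℝ)) := by
      intro u _
      rw [toPt_shiftv, smul_add]
      congr 2
      · simp [shiftv]
      · simp [shiftv]
    rw [Finset.sum_congr rfl this, Finset.sum_add_distrib, hwc, ← Finset.sum_smul, hw1, one_smul]
    simp [Prod.ext_iff]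

lemma shiftT_shiftT (k : ℤ) (T : Finset (ℤ × ℤ)) : shiftT (-k) (shiftT k T) = T := by
  ext v
  rw [mem_shiftT, mem_shiftT]
  constructor
  · intro h; simpa using h
  · intro h; simpa using h

lemma mem_hull_shift {k : ℤ} {T : Finset (ℤ × ℤ)} {p : Pt} :
    p ∈ hull (shiftT k T) ↔ ((p.1, p.2 - (k : ℝ)) : Pt) ∈ hull T := by
  constructor
  · intro h
    have := mem_hull_shift_of (k := -k) h
    rw [shiftT_shiftT] at this
    have hcast : ((-k : ℤ) : ℝ) = -(k : ℝ) := by push_cast; ring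
    rw [hcast] at this
    rw [show p.2 - (k : ℝ) = p.2 + -(k : ℝ) from by ring]
    exact this
  · intro h
    have := mem_hull_shift_of (k := k) h
    have hp : ((p.1, p.2 - (k : ℝ)).1, (p.1, p.2 - (k : ℝ)).2 + (k : ℝ)) = p := by
      simp [Prod.ext_iff]
    rwa [hp] at this

/-! ### Gluing two triangulations vertically -/

def glueUT {m n₁ n₂ : ℕ} (𝒜 : UnimodularTriangulation (gridRegion m n₁))
    (ℬ : UnimodularTriangulation (gridRegion m n₂)) :
    UnimodularTriangulation (gridRegion m (n₁ + n₂)) where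
  tris := 𝒜.tris ∪ ℬ.tris.image (shiftT (n₁ : ℤ))
  card3 := by
    intro T hT
    rcases Finset.mem_union.1 hT with h | h
    · exact 𝒜.card3 T h
    · obtain ⟨T', hT', rfl⟩ := Finset.mem_image.1 h
      exact (uniT_shift (uniT_of_mem ℬ hT')).1
  unimodular := by
    intro T hT
    rcases Finset.mem_union.1 hT with h | h
    · exact 𝒜.unimodular T h
    · obtain ⟨T', hT', rfl⟩ := Finset.mem_image.1 h
      exact (uniT_shift (uniT_of_mem ℬ hT')).2
  cover := by
    ext p
    simp only [Set.mem_iUnion]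
    constructor
    · rintro ⟨T, hT, hp⟩
      rcases Finset.mem_union.1 hT with h | h
      · have hm := mem_gridRegion_iff.1 (hull_subset_region 𝒜 h hp)
        rw [mem_gridRegion_iff]
        push_cast at hm ⊢
        refine ⟨hm.1, hm.2.1, hm.2.2.1, by linarith [hm.2.2.2]⟩
      · obtain ⟨T', hT', rfl⟩ := Finset.mem_image.1 h
        have hp' := mem_hull_shift.1 hp
        have hm := mem_gridRegion_iff.1 (hull_subset_region ℬ hT' hp')
        rw [mem_gridRegion_iff]
        simp only at hm
        push_cast at hm ⊢
        refine ⟨hm.1, hm.2.1, by linarith [hm.2.2.1, (Nat.cast_nonneg n₁ : (0:ℝ) ≤ n₁)], by linarith [hm.2.2.2]⟩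
    · intro hp
      rw [mem_gridRegion_iff] at hp
      by_cases hy : p.2 ≤ (n₁ : ℝ)
      · have hp₁ : p ∈ gridRegion m n₁ :=
          mem_gridRegion_iff.2 ⟨hp.1, hp.2.1, hp.2.2.1, hy⟩
        rw [← 𝒜.cover] at hp₁
        simp only [Set.mem_iUnion] at hp₁
        obtain ⟨T, hT, hpT⟩ := hp₁
        exact ⟨T, Finset.mem_union_left _ hT, hpT⟩
      · push_neg at hy
        have hp₂ : ((p.1, p.2 - (n₁ : ℝ)) : Pt) ∈ gridRegion m n₂ := by
          rw [mem_gridRegion_iff]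
          have := hp.2.2.2
          push_cast at this ⊢
          exact ⟨hp.1, hp.2.1, by linarith, by linarith⟩
        rw [← ℬ.cover] at hp₂
        simp only [Set.mem_iUnion] at hp₂
        obtain ⟨T', hT', hpT'⟩ := hp₂
        exact ⟨shiftT (n₁ : ℤ) T',
          Finset.mem_union_right _ (Finset.mem_image_of_mem _ hT'),
          mem_hull_shift.2 hpT'⟩
  glue := by
    intro T₁ hT₁ T₂ hT₂
    have hlowv : ∀ {T}, T ∈ 𝒜.tris → ∀ v ∈ T, v.2 ≤ (n₁ : ℤ) :=
      fun hT v hv => (vert_mem_grid 𝒜 hT hv).2.2.2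
    have hhighv : ∀ {T'}, T' ∈ ℬ.tris → ∀ v ∈ shiftT (n₁ : ℤ) T', (n₁ : ℤ) ≤ v.2 := by
      intro T' hT' v hv
      rw [mem_shiftT] at hv
      have := (vert_mem_grid ℬ hT' hv).2.2.1
      simp only at this
      omega
    rcases Finset.mem_union.1 hT₁ with h₁ | h₁ <;> rcases Finset.mem_union.1 hT₂ with h₂ | h₂
    · exact 𝒜.glue _ h₁ _ h₂
    · obtain ⟨T', hT', rfl⟩ := Finset.mem_image.1 h₂
      exact glue_row_separated (uniT_of_mem 𝒜 h₁) (uniT_shift (uniT_of_mem ℬ hT'))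
        (hlowv h₁) (hhighv hT')
    · obtain ⟨T', hT', rfl⟩ := Finset.mem_image.1 h₁
      rw [Set.inter_comm, Finset.inter_comm]
      exact glue_row_separated (uniT_of_mem 𝒜 h₂) (uniT_shift (uniT_of_mem ℬ hT'))
        (hlowv h₂) (hhighv hT')
    · obtain ⟨T', hT', rfl⟩ := Finset.mem_image.1 h₁
      obtain ⟨T'', hT'', rfl⟩ := Finset.mem_image.1 h₂
      have hg := ℬ.glue _ hT' _ hT''
      have him : shiftT (n₁ : ℤ) T' ∩ shiftT (n₁ : ℤ) T'' = shiftT (n₁ : ℤ) (T' ∩ T'') := by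
        unfold shiftT
        exact (Finset.image_inter _ _ (shiftv_inj _)).symm
      rw [him]
      ext p
      rw [Set.mem_inter_iff, mem_hull_shift, mem_hull_shift, mem_hull_shift,
        ← Set.mem_inter_iff, hg]
  vertices := by
    intro v
    constructor
    · rintro ⟨T, hT, hv⟩
      rcases Finset.mem_union.1 hT with h | h
      · have := vert_mem_grid 𝒜 h hv
        rw [toPt_mem_grid]
        push_cast at this ⊢
        omega
      · obtain ⟨T', hT', rfl⟩ := Finset.mem_image.1 h
        rw [mem_shiftT] at hv
        have := vert_mem_grid ℬ hT' hv
        rw [toPt_mem_grid]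
        simp only at this
        push_cast at this ⊢
        omega
    · intro hv
      rw [toPt_mem_grid] at hv
      by_cases hy : v.2 ≤ (n₁ : ℤ)
      · obtain ⟨T, hT, hvT⟩ := (𝒜.vertices v).2
          (toPt_mem_grid.2 ⟨hv.1, hv.2.1, hv.2.2.1, hy⟩)
        exact ⟨T, Finset.mem_union_left _ hT, hvT⟩
      · push_neg at hy
        have hv' : toPt ((v.1, v.2 - (n₁ : ℤ))) ∈ gridRegion m n₂ := by
          rw [toPt_mem_grid]
          have := hv.2.2.2
          push_cast at this ⊢
          omega
        obtain ⟨T', hT', hvT'⟩ := (ℬ.vertices _).2 hv'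
        refine ⟨shiftT (n₁ : ℤ) T',
          Finset.mem_union_right _ (Finset.mem_image_of_mem _ hT'), ?_⟩
        rw [mem_shiftT]
        exact hvT'

lemma part_low {m n₁ n₂ : ℕ} (a : UnimodularTriangulation (gridRegion m n₁))
    (b : UnimodularTriangulation (gridRegion m n₂)) :
    (a.tris ∪ b.tris.image (shiftT (n₁ : ℤ))).filter
      (fun T => ∀ v ∈ T, v.2 ≤ (n₁ : ℤ)) = a.tris := by
  classical
  ext T
  rw [Finset.mem_filter]
  constructor
  · rintro ⟨hT, hpred⟩
    rcases Finset.mem_union.1 hT with h | h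
    · exact h
    · exfalso
      obtain ⟨T', hT', rfl⟩ := Finset.mem_image.1 h
      apply no_flat' (uniT_of_mem b hT') (k := 0)
      intro v hv
      have h1 : (vert_mem_grid b hT' hv).2.2.1 = (vert_mem_grid b hT' hv).2.2.1 := rfl
      have h2 : 0 ≤ v.2 := (vert_mem_grid b hT' hv).2.2.1
      have h3 : shiftv (n₁ : ℤ) v ∈ shiftT (n₁ : ℤ) T' :=
        Finset.mem_image_of_mem _ hv
      have h4 := hpred _ h3
      simp only [shiftv] at h4
      omega
  · intro hT
    refine ⟨Finset.mem_union_left _ hT, fun v hv => (vert_mem_grid a hT hv).2.2.2⟩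

lemma part_high {m n₁ n₂ : ℕ} (a : UnimodularTriangulation (gridRegion m n₁))
    (b : UnimodularTriangulation (gridRegion m n₂)) :
    (a.tris ∪ b.tris.image (shiftT (n₁ : ℤ))).filter
      (fun T => ¬ ∀ v ∈ T, v.2 ≤ (n₁ : ℤ)) = b.tris.image (shiftT (n₁ : ℤ)) := by
  classical
  ext T
  rw [Finset.mem_filter]
  constructor
  · rintro ⟨hT, hpred⟩
    rcases Finset.mem_union.1 hT with h | h
    · exact absurd (fun v hv => (vert_mem_grid a h hv).2.2.2) hpred
    · exact h
  · intro h
    refine ⟨Finset.mem_union_right _ h, ?_⟩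
    intro hpred
    obtain ⟨T', hT', rfl⟩ := Finset.mem_image.1 h
    apply no_flat' (uniT_of_mem b hT') (k := 0)
    intro v hv
    have h2 : 0 ≤ v.2 := (vert_mem_grid b hT' hv).2.2.1
    have h3 : shiftv (n₁ : ℤ) v ∈ shiftT (n₁ : ℤ) T' := Finset.mem_image_of_mem _ hv
    have h4 := hpred _ h3
    simp only [shiftv] at h4
    omega

lemma glueUT_inj {m n₁ n₂ : ℕ} : Function.Injective
    (fun P : (UnimodularTriangulation (gridRegion m n₁)) ×
        (UnimodularTriangulation (gridRegion m n₂)) => glueUT P.1 P.2) := by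
  rintro ⟨a, b⟩ ⟨a', b'⟩ h
  have htris := congrArg UnimodularTriangulation.tris h
  simp only [glueUT] at htris
  have hlow : a.tris = a'.tris := by
    rw [← part_low a b, ← part_low a' b', htris]
  have hhigh : b.tris.image (shiftT (n₁ : ℤ)) = b'.tris.image (shiftT (n₁ : ℤ)) := by
    rw [← part_high a b, ← part_high a' b', htris]
  have hb : b.tris = b'.tris := by
    apply Finset.image_injective (f := shiftT (n₁ : ℤ)) ?_ hhigh
    intro X Y hXY
    have : shiftT (-(n₁ : ℤ)) (shiftT (n₁ : ℤ) X) = shiftT (-(n₁ : ℤ)) (shiftT (n₁ : ℤ) Y) := by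
      rw [hXY]
    rwa [shiftT_shiftT, shiftT_shiftT] at this
  rw [Prod.ext_iff]
  exact ⟨UT_ext hlow, UT_ext hb⟩

theorem f_mul_le (m n₁ n₂ : ℕ) : f m n₁ * f m n₂ ≤ f m (n₁ + n₂) := by
  rw [f, f, f, ← Nat.card_prod]
  exact Nat.card_le_card_of_injective _ glueUT_inj

/-! ### The explicit strip triangulation of `[0,m] × [0,1]` -/

def lowT (i : ℤ) : Finset (ℤ × ℤ) := {(i, 0), (i + 1, 0), (i + 1, 1)}

def highT (i : ℤ) : Finset (ℤ × ℤ) := {(i, 0), (i, 1), (i + 1, 1)}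

def stripTris (m : ℕ) : Finset (Finset (ℤ × ℤ)) :=
  (Finset.range m).biUnion (fun i => {lowT (i : ℤ), highT (i : ℤ)})

lemma mem_stripTris {m : ℕ} {T : Finset (ℤ × ℤ)} :
    T ∈ stripTris m ↔ ∃ i : ℕ, i < m ∧ (T = lowT (i : ℤ) ∨ T = highT (i : ℤ)) := by
  simp only [stripTris, Finset.mem_biUnion, Finset.mem_range, Finset.mem_insert,
    Finset.mem_singleton]
  try tauto

lemma card3_triple {a b c : ℤ × ℤ} (hab : a ≠ b) (hac : a ≠ c) (hbc : b ≠ c) :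
    ({a, b, c} : Finset (ℤ × ℤ)).card = 3 := by
  rw [Finset.card_insert_of_notMem (by simp [hab, hac]),
    Finset.card_insert_of_notMem (by simp [hbc]), Finset.card_singleton]

lemma uniT_lowT (i : ℤ) : UniT (lowT i) := by
  constructor
  · exact card3_triple (by simp [Prod.ext_iff]) (by simp [Prod.ext_iff]; try omega)
      (by simp [Prod.ext_iff])
  · intro a ha b hb c hc hab hac hbc
    simp only [lowT, Finset.mem_insert, Finset.mem_singleton] at ha hb hc
    rcases ha with rfl | rfl | rfl <;> rcases hb with rfl | rfl | rfl <;>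
      rcases hc with rfl | rfl | rfl <;>
      first
        | exact absurd rfl hab
        | exact absurd rfl hac
        | exact absurd rfl hbc
        | (simp only [idet]; ring_nf; try norm_num)

lemma uniT_highT (i : ℤ) : UniT (highT i) := by
  constructor
  · exact card3_triple (by simp [Prod.ext_iff]) (by simp [Prod.ext_iff]; try omega)
      (by simp [Prod.ext_iff])
  · intro a ha b hb c hc hab hac hbc
    simp only [highT, Finset.mem_insert, Finset.mem_singleton] at ha hb hc
    rcases ha with rfl | rfl | rfl <;> rcases hb with rfl | rfl | rfl <;>
      rcases hc with rfl | rfl | rfl <;>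
      first
        | exact absurd rfl hab
        | exact absurd rfl hac
        | exact absurd rfl hbc
        | (simp only [idet]; ring_nf; try norm_num)

lemma mem_lowT_bounds {i : ℤ} {v : ℤ × ℤ} (hv : v ∈ lowT i) :
    i ≤ v.1 ∧ v.1 ≤ i + 1 ∧ 0 ≤ v.2 ∧ v.2 ≤ 1 := by
  simp only [lowT, Finset.mem_insert, Finset.mem_singleton] at hv
  rcases hv with rfl | rfl | rfl <;> simp <;> omega

lemma mem_highT_bounds {i : ℤ} {v : ℤ × ℤ} (hv : v ∈ highT i) :
    i ≤ v.1 ∧ v.1 ≤ i + 1 ∧ 0 ≤ v.2 ∧ v.2 ≤ 1 := by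
  simp only [highT, Finset.mem_insert, Finset.mem_singleton] at hv
  rcases hv with rfl | rfl | rfl <;> simp <;> omega

lemma strip_bounds {m : ℕ} {T : Finset (ℤ × ℤ)} (hT : T ∈ stripTris m) :
    ∃ i : ℕ, i < m ∧ UniT T ∧ ∀ v ∈ T, (i : ℤ) ≤ v.1 ∧ v.1 ≤ i + 1 ∧ 0 ≤ v.2 ∧ v.2 ≤ 1 := by
  obtain ⟨i, him, hor⟩ := mem_stripTris.1 hT
  rcases hor with rfl | rfl
  · exact ⟨i, him, uniT_lowT _, fun v hv => mem_lowT_bounds hv⟩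
  · exact ⟨i, him, uniT_highT _, fun v hv => mem_highT_bounds hv⟩

lemma glue_self {T : Finset (ℤ × ℤ)} : hull T ∩ hull T = hull (T ∩ T) := by
  rw [Finset.inter_self, Set.inter_self]

/-- Gluing of the two triangles of a unit square along the diagonal. -/
lemma glue_low_high (i : ℤ) : hull (lowT i) ∩ hull (highT i) = hull (lowT i ∩ highT i) := by
  classical
  set ℓ : Pt →ₗ[ℝ] ℝ := LinearMap.snd ℝ ℝ ℝ - LinearMap.fst ℝ ℝ ℝ with hℓ
  have hℓap : ∀ p : Pt, ℓ p = p.2 - p.1 := fun p => rfl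
  apply glue_of_separated ℓ (c := -(i : ℝ))
  · intro v hv
    simp only [lowT, Finset.mem_insert, Finset.mem_singleton] at hv
    rcases hv with rfl | rfl | rfl <;> (rw [hℓap]; simp only [toPt]; push_cast; try linarith)
  · intro v hv
    simp only [highT, Finset.mem_insert, Finset.mem_singleton] at hv
    rcases hv with rfl | rfl | rfl <;> (rw [hℓap]; simp only [toPt]; push_cast; try linarith)
  · intro p hp
    refine hull_mono ?_ hp.1
    intro v hv
    rw [Finset.mem_filter] at hv
    obtain ⟨hv1, hv2⟩ := hv
    rw [Finset.mem_inter]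
    refine ⟨hv1, ?_⟩
    simp only [lowT, Finset.mem_insert, Finset.mem_singleton] at hv1
    rw [hℓap] at hv2
    rcases hv1 with rfl | rfl | rfl
    · simp [highT]
    · exfalso
      simp only [toPt] at hv2
      push_cast at hv2
      linarith
    · simp [highT]

def stripUT (m : ℕ) (hm : 0 < m) : UnimodularTriangulation (gridRegion m 1) where
  tris := stripTris m
  card3 := by
    intro T hT
    obtain ⟨i, _, hu, _⟩ := strip_bounds hT
    exact hu.1
  unimodular := by
    intro T hT
    obtain ⟨i, _, hu, _⟩ := strip_bounds hT
    exact hu.2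
  cover := by
    ext p
    simp only [Set.mem_iUnion]
    constructor
    · rintro ⟨T, hT, hp⟩
      obtain ⟨i, him, hu, hb⟩ := strip_bounds hT
      have hsub : hull T ⊆ gridRegion m 1 := by
        apply convexHull_min _ (convex_Icc _ _)
        rintro q ⟨v, hv, rfl⟩
        show toPt v ∈ gridRegion m 1
        rw [toPt_mem_grid]
        have hbv := hb v (by exact_mod_cast hv)
        have him' : (i : ℤ) + 1 ≤ (m : ℤ) := by exact_mod_cast him
        push_cast
        omega
      exact hsub hp
    · intro hp
      rw [mem_gridRegion_iff] at hp
      obtain ⟨hx0, hxm, hy0, hy1⟩ := hp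
      have hy1' : p.2 ≤ 1 := by exact_mod_cast hy1
      have hm' : (0 : ℤ) < (m : ℤ) := by exact_mod_cast hm
      set i : ℤ := min ((m : ℤ) - 1) ⌊p.1⌋ with hi
      have hi0 : 0 ≤ i := le_min (by omega) (Int.floor_nonneg.2 hx0)
      have him : i ≤ (m : ℤ) - 1 := min_le_left _ _
      have hile : (i : ℝ) ≤ p.1 := by
        have h1 : (i : ℝ) ≤ ((⌊p.1⌋ : ℤ) : ℝ) := by
          exact_mod_cast (min_le_right ((m : ℤ) - 1) ⌊p.1⌋)
        exact le_trans h1 (Int.floor_le p.1)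
      have hige : p.1 ≤ (i : ℝ) + 1 := by
        rcases le_or_gt ⌊p.1⌋ ((m : ℤ) - 1) with hc | hc
        · have hieq : i = ⌊p.1⌋ := min_eq_right hc
          rw [hieq]
          have := Int.lt_floor_add_one p.1
          linarith
        · have hieq : i = (m : ℤ) - 1 := min_eq_left (by omega)
          rw [hieq]
          push_cast
          linarith
      obtain ⟨iN, hiNm, hiNe⟩ : ∃ iN : ℕ, iN < m ∧ (iN : ℤ) = i :=
        ⟨i.toNat, by omega, Int.toNat_of_nonneg hi0⟩
      have hlowmem : lowT i ∈ stripTris m :=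
        mem_stripTris.2 ⟨iN, hiNm, Or.inl (by rw [hiNe])⟩
      have hhighmem : highT i ∈ stripTris m :=
        mem_stripTris.2 ⟨iN, hiNm, Or.inr (by rw [hiNe])⟩
      have hu0 : (0 : ℝ) ≤ p.1 - i := by linarith
      have hu1 : p.1 - i ≤ 1 := by linarith
      rcases le_total p.2 (p.1 - i) with hcase | hcase
      · refine ⟨lowT i, hlowmem, ?_⟩
        have hmem := mem_hull_triple (a := (i, 0)) (b := (i + 1, 0)) (c := (i + 1, 1))
          (by simp [Prod.ext_iff]) (by simp [Prod.ext_iff]; try omega) (by simp [Prod.ext_iff])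
          (w1 := 1 - (p.1 - i)) (w2 := (p.1 - i) - p.2) (w3 := p.2)
          (by linarith) (by linarith) (by linarith) (by ring)
        have heq : (1 - (p.1 - i)) • toPt (i, 0) + ((p.1 - i) - p.2) • toPt (i + 1, 0)
            + p.2 • toPt (i + 1, 1) = p := by
          rw [Prod.ext_iff]
          constructor
          · simp only [toPt, Prod.fst_add, Prod.smul_mk, smul_eq_mul]
            push_cast
            try ring
          · simp only [toPt, Prod.snd_add, Prod.smul_mk, smul_eq_mul]
            push_cast
            try ring
        have hl : lowT i = {(i, 0), (i + 1, 0), (i + 1, 1)} := rfl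
        rw [hl, ← heq]
        exact hmem
      · refine ⟨highT i, hhighmem, ?_⟩
        have hmem := mem_hull_triple (a := (i, 0)) (b := (i, 1)) (c := (i + 1, 1))
          (by simp [Prod.ext_iff]) (by simp [Prod.ext_iff]; try omega) (by simp [Prod.ext_iff]; try omega)
          (w1 := 1 - p.2) (w2 := p.2 - (p.1 - i)) (w3 := p.1 - i)
          (by linarith) (by linarith) (by linarith) (by ring)
        have heq : (1 - p.2) • toPt (i, 0) + (p.2 - (p.1 - i)) • toPt (i, 1)
            + (p.1 - i) • toPt (i + 1, 1) = p := by
          rw [Prod.ext_iff]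
          constructor
          · simp only [toPt, Prod.fst_add, Prod.smul_mk, smul_eq_mul]
            push_cast
            try ring
          · simp only [toPt, Prod.snd_add, Prod.smul_mk, smul_eq_mul]
            push_cast
            try ring
        have hl : highT i = {(i, 0), (i, 1), (i + 1, 1)} := rfl
        rw [hl, ← heq]
        exact hmem
  glue := by
    intro T₁ hT₁ T₂ hT₂
    obtain ⟨i, him, hor₁⟩ := mem_stripTris.1 hT₁
    obtain ⟨j, hjm, hor₂⟩ := mem_stripTris.1 hT₂
    have hui : UniT T₁ := by
      rcases hor₁ with rfl | rfl
      exacts [uniT_lowT _, uniT_highT _]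
    have huj : UniT T₂ := by
      rcases hor₂ with rfl | rfl
      exacts [uniT_lowT _, uniT_highT _]
    have hbi : ∀ v ∈ T₁, (i : ℤ) ≤ v.1 ∧ v.1 ≤ i + 1 ∧ 0 ≤ v.2 ∧ v.2 ≤ 1 := by
      rcases hor₁ with rfl | rfl
      exacts [fun v hv => mem_lowT_bounds hv, fun v hv => mem_highT_bounds hv]
    have hbj : ∀ v ∈ T₂, (j : ℤ) ≤ v.1 ∧ v.1 ≤ j + 1 ∧ 0 ≤ v.2 ∧ v.2 ≤ 1 := by
      rcases hor₂ with rfl | rfl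
      exacts [fun v hv => mem_lowT_bounds hv, fun v hv => mem_highT_bounds hv]
    rcases lt_trichotomy i j with hij | hij | hij
    · apply glue_col_separated hui huj (k := (i : ℤ) + 1)
      · intro v hv; exact (hbi v hv).2.1
      · intro v hv
        have h1 := (hbj v hv).1
        have h2 : (i : ℤ) + 1 ≤ (j : ℤ) := by exact_mod_cast hij
        omega
    · subst hij
      rcases hor₁ with rfl | rfl <;> rcases hor₂ with rfl | rfl
      · exact glue_self
      · exact glue_low_high _
      · rw [Set.inter_comm, Finset.inter_comm]
        exact glue_low_high _
      · exact glue_self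
    · rw [Set.inter_comm, Finset.inter_comm]
      apply glue_col_separated huj hui (k := (j : ℤ) + 1)
      · intro v hv; exact (hbj v hv).2.1
      · intro v hv
        have h1 := (hbi v hv).1
        have h2 : (j : ℤ) + 1 ≤ (i : ℤ) := by exact_mod_cast hij
        omega
  vertices := by
    intro v
    constructor
    · rintro ⟨T, hT, hv⟩
      obtain ⟨i, him, _, hb⟩ := strip_bounds hT
      have hbv := hb v hv
      rw [toPt_mem_grid]
      have him' : (i : ℤ) + 1 ≤ (m : ℤ) := by exact_mod_cast him
      push_cast
      omega
    · intro hv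
      rw [toPt_mem_grid] at hv
      push_cast at hv
      have hv2 : v.2 = 0 ∨ v.2 = 1 := by omega
      by_cases hvm : v.1 < (m : ℤ)
      · obtain ⟨iN, hiNe, hiNm⟩ : ∃ iN : ℕ, (iN : ℤ) = v.1 ∧ iN < m :=
          ⟨v.1.toNat, Int.toNat_of_nonneg hv.1, by omega⟩
        rcases hv2 with h2 | h2
        · refine ⟨lowT v.1, mem_stripTris.2 ⟨iN, hiNm, Or.inl (by rw [hiNe])⟩, ?_⟩
          have hveq : v = (v.1, 0) := Prod.ext rfl h2
          rw [hveq]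
          simp [lowT]
        · refine ⟨highT v.1, mem_stripTris.2 ⟨iN, hiNm, Or.inr (by rw [hiNe])⟩, ?_⟩
          have hveq : v = (v.1, 1) := Prod.ext rfl h2
          rw [hveq]
          simp [highT]
      · have hvm' : v.1 = (m : ℤ) := by omega
        obtain ⟨iN, hiNm⟩ : ∃ iN : ℕ, iN + 1 = m := ⟨m - 1, by omega⟩
        have hiNm' : iN < m := by omega
        have hiNe : (iN : ℤ) + 1 = v.1 := by
          rw [hvm']
          exact_mod_cast congrArg (Nat.cast : ℕ → ℤ) hiNm
        rcases hv2 with h2 | h2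
        · refine ⟨lowT (iN : ℤ), mem_stripTris.2 ⟨iN, hiNm', Or.inl rfl⟩, ?_⟩
          have hveq : v = ((iN : ℤ) + 1, 0) := Prod.ext (by omega) h2
          rw [hveq]
          simp [lowT]
        · refine ⟨lowT (iN : ℤ), mem_stripTris.2 ⟨iN, hiNm', Or.inl rfl⟩, ?_⟩
          have hveq : v = ((iN : ℤ) + 1, 1) := Prod.ext (by omega) h2
          rw [hveq]
          simp [lowT]

lemma f_pos (m : ℕ) (hm : 0 < m) : ∀ n : ℕ, 0 < n → 0 < f m n := by
  have h1 : 0 < f m 1 := by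
    rw [f]
    have : Nonempty (UnimodularTriangulation (gridRegion m 1)) := ⟨stripUT m hm⟩
    exact Nat.card_pos
  intro n
  induction n with
  | zero => intro h; exact absurd h (by omega)
  | succ k ih =>
    intro _
    by_cases hk : 0 < k
    · have := f_mul_le m k 1
      have hk' := ih hk
      nlinarith
    · have hk0 : k = 0 := by omega
      rw [hk0]
      simpa using h1

/-! ### Encoding a triangulation by apex data at edge midpoints -/

def box (m n : ℕ) : Finset (ℤ × ℤ) :=
  Finset.Icc 0 (2 * m : ℤ) ×ˢ Finset.Icc 0 (2 * n : ℤ)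

def Pred {m n : ℕ} (𝒯 : UnimodularTriangulation (gridRegion m n)) (q : ℤ × ℤ)
    (σ : Bool) (x : Fin (m + 1)) : Prop :=
  ∃ T ∈ 𝒯.tris, ∃ A ∈ T, ∃ C ∈ T, ∃ c ∈ T, A.1 < C.1 ∧ c ≠ A ∧ c ≠ C ∧
    A + C = q ∧ σ = decide (0 < idet A C c) ∧ ((x : ℕ) : ℤ) = c.1

open Classical in
noncomputable def code {m n : ℕ} (𝒯 : UnimodularTriangulation (gridRegion m n)) :
    (box m n) → Finset (Bool × Fin (m + 1)) :=
  fun q => Finset.univ.filter (fun sx => Pred 𝒯 q.1 sx.1 sx.2)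

lemma eq_triple_of_card3 {T : Finset (ℤ × ℤ)} (h3 : T.card = 3) {a b c : ℤ × ℤ}
    (ha : a ∈ T) (hb : b ∈ T) (hc : c ∈ T) (hab : a ≠ b) (hac : a ≠ c) (hbc : b ≠ c) :
    T = {a, b, c} := by
  have hsub : ({a, b, c} : Finset (ℤ × ℤ)) ⊆ T := by
    intro v hv
    rcases Finset.mem_insert.1 hv with h | h
    · rw [h]; exact ha
    rcases Finset.mem_insert.1 h with h' | h'
    · rw [h']; exact hb
    · rw [Finset.mem_singleton.1 h']; exact hc
  exact (Finset.eq_of_subset_of_card_le hsub (by rw [h3, card3_triple hab hac hbc])).symm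

lemma pair_eq_of_lt {A C A' C' : ℤ × ℤ} (h : ({A, C} : Finset (ℤ × ℤ)) = {A', C'})
    (h1 : A.1 < C.1) (h2 : A'.1 < C'.1) : A = A' ∧ C = C' := by
  have hA' : A' ∈ ({A, C} : Finset (ℤ × ℤ)) := by rw [h]; simp
  have hC' : C' ∈ ({A, C} : Finset (ℤ × ℤ)) := by rw [h]; simp
  simp only [Finset.mem_insert, Finset.mem_singleton] at hA' hC'
  rcases hA' with h3 | h3 <;> rcases hC' with h4 | h4
  · exfalso; rw [h3, h4] at h2; exact lt_irrefl _ h2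
  · exact ⟨h3.symm, h4.symm⟩
  · exfalso; rw [h3, h4] at h2; omega
  · exfalso; rw [h3, h4] at h2; exact lt_irrefl _ h2

/-- Final reconstruction step: if an edge of `T ∈ 𝒯₁` lies in some triangle of `𝒯₂`,
and the codes agree, then `T ∈ 𝒯₂`. -/
lemma step_final {m n : ℕ} {𝒯₁ 𝒯₂ : UnimodularTriangulation (gridRegion m n)}
    (hcode : code 𝒯₁ = code 𝒯₂) {T : Finset (ℤ × ℤ)} (hT : T ∈ 𝒯₁.tris)
    {A C : ℤ × ℤ} (hA : A ∈ T) (hC : C ∈ T) (hlt : A.1 < C.1)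
    {T2 : Finset (ℤ × ℤ)} (hT2 : T2 ∈ 𝒯₂.tris) (hA2 : A ∈ T2) (hC2 : C ∈ T2) :
    T ∈ 𝒯₂.tris := by
  classical
  have hAC : A ≠ C := by intro h; rw [h] at hlt; exact lt_irrefl _ hlt
  obtain ⟨c, hcA, hcC, hTeq⟩ := third_elt (𝒯₁.card3 T hT) hA hC hAC
  have hcT : c ∈ T := by rw [hTeq]; simp
  have hcb := vert_mem_grid 𝒯₁ hT hcT
  have hAb := vert_mem_grid 𝒯₁ hT hA
  have hCb := vert_mem_grid 𝒯₁ hT hC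
  have hqbox : A + C ∈ box m n := by
    simp only [box, Finset.mem_product, Finset.mem_Icc, Prod.fst_add, Prod.snd_add]
    omega
  set x : Fin (m + 1) := ⟨c.1.toNat, by omega⟩ with hx
  have hxc : ((x : ℕ) : ℤ) = c.1 := by
    rw [hx]
    simp only
    omega
  set σ : Bool := decide (0 < idet A C c) with hσ
  have hpred1 : Pred 𝒯₁ (A + C) σ x :=
    ⟨T, hT, A, hA, C, hC, c, hcT, hlt, hcA, hcC, rfl, rfl, hxc⟩
  have hmem1 : (σ, x) ∈ code 𝒯₁ ⟨A + C, hqbox⟩ := by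
    rw [code, Finset.mem_filter]
    exact ⟨Finset.mem_univ _, hpred1⟩
  rw [hcode] at hmem1
  rw [code, Finset.mem_filter] at hmem1
  obtain ⟨-, T₂', hT₂', A', hA', C', hC', c', hc', hlt', hc'A', hc'C', hmid, hσ', hxc'⟩ :=
    hmem1
  have hA'C' : A' ≠ C' := by intro h; rw [h] at hlt'; exact lt_irrefl _ hlt'
  have hpair := mid_unique 𝒯₂ hT2 hT₂' hA2 hC2 hAC hA' hC' hA'C' hmid.symm
  obtain ⟨hAA', hCC'⟩ := pair_eq_of_lt hpair hlt hlt'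
  rw [← hAA'] at hA' hlt' hc'A' hσ'
  rw [← hCC'] at hC' hc'C' hσ'
  have habs1 : |idet A C c| = 1 := uni_idet 𝒯₁ hT hA hC hcT hAC hcA.symm hcC.symm
  have habs2 : |idet A C c'| = 1 := uni_idet 𝒯₂ hT₂' hA' hC' hc' hAC hc'A'.symm hc'C'.symm
  have hiff : (0 < idet A C c) ↔ (0 < idet A C c') := by
    have := hσ.symm.trans hσ'
    exact decide_eq_decide.1 this
  have hd : idet A C c = idet A C c' := by
    rcases (abs_eq (by norm_num : (0:ℤ) ≤ 1)).1 habs1 with h1 | h1 <;>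
      rcases (abs_eq (by norm_num : (0:ℤ) ≤ 1)).1 habs2 with h2 | h2 <;>
      rw [h1, h2] at hiff ⊢ <;> first
        | rfl
        | (exfalso; norm_num at hiff)
  have hcx : c'.1 = c.1 := by rw [← hxc, ← hxc']
  have hc2 : c'.2 = c.2 := by
    have h0 : (C.1 - A.1) * (c.2 - c'.2) = 0 := by
      simp only [idet] at hd
      rw [hcx] at hd
      linear_combination hd
    rcases mul_eq_zero.1 h0 with h | h
    · omega
    · omega
  have hcc' : c' = c := Prod.ext hcx hc2
  have hT₂eq : T₂' = {A, C, c'} :=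
    eq_triple_of_card3 (𝒯₂.card3 _ hT₂') hA' hC' hc' hAC hc'A'.symm hc'C'.symm
  have : T₂' = T := by
    rw [hT₂eq, hcc', hTeq]
  rw [← this]
  exact hT₂'

open Classical in
/-- Number of `𝒯₁`-edges meeting the fiber over `x0` strictly below all of `hull T`'s fiber. -/
noncomputable def mu {m n : ℕ} (𝒯 : UnimodularTriangulation (gridRegion m n))
    (x0 : ℝ) (T : Finset (ℤ × ℤ)) : ℕ :=
  ((𝒯.edges).filter (fun e => ∃ y : ℝ, 0 ≤ y ∧ ((x0, y) : Pt) ∈ hull e ∧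
      ∀ y' : ℝ, ((x0, y') : Pt) ∈ hull T → y < y')).card

lemma fiber_min {T : Finset (ℤ × ℤ)} {x0 y0 : ℝ} (h : ((x0, y0) : Pt) ∈ hull T) :
    ∃ y1 : ℝ, ((x0, y1) : Pt) ∈ hull T ∧ ∀ y : ℝ, ((x0, y) : Pt) ∈ hull T → y1 ≤ y := by
  have hcomp : IsCompact (hull T ∩ {p : Pt | p.1 = x0}) := by
    apply IsCompact.inter_right
    · exact (T.finite_toSet.image toPt).isCompact_convexHull ℝ
    · exact isClosed_eq continuous_fst continuous_const
  have hne : (hull T ∩ {p : Pt | p.1 = x0}).Nonempty := ⟨(x0, y0), h, rfl⟩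
  obtain ⟨q, hq, hqmin⟩ := hcomp.exists_isMinOn hne continuous_snd.continuousOn
  refine ⟨q.2, ?_, ?_⟩
  · have hqe : q = ((x0, q.2) : Pt) := Prod.ext hq.2 rfl
    rw [← hqe]
    exact hq.1
  · intro y hy
    exact isMinOn_iff.1 hqmin (x0, y) ⟨hy, rfl⟩

lemma pair_mem_edges (𝒯 : UnimodularTriangulation R) {T : Finset (ℤ × ℤ)}
    (hT : T ∈ 𝒯.tris) {A C : ℤ × ℤ} (hA : A ∈ T) (hC : C ∈ T) (hAC : A ≠ C) :
    ({A, C} : Finset (ℤ × ℤ)) ∈ 𝒯.edges := by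
  rw [UnimodularTriangulation.edges, Finset.mem_biUnion]
  refine ⟨T, hT, Finset.mem_powersetCard.2 ⟨?_, Finset.card_pair hAC⟩⟩
  intro v hv
  rcases Finset.mem_insert.1 hv with h | h
  · rw [h]; exact hA
  · rw [Finset.mem_singleton.1 h]; exact hC

lemma infinite_exists_gt {S : Set ℕ} (hS : S.Infinite) (a : ℕ) : ∃ k ∈ S, a < k := by
  by_contra hcon
  push_neg at hcon
  exact hS (Set.Finite.subset (Set.finite_Iic a) (fun k hk => hcon k hk))

lemma bottom_edge_of_tri (𝒯 : UnimodularTriangulation R) {T : Finset (ℤ × ℤ)}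
    (hT : T ∈ 𝒯.tris) {x0 y0 : ℝ} (hx0 : ∀ k : ℤ, (k : ℝ) ≠ x0)
    (hp : ((x0, y0) : Pt) ∈ hull T)
    (hmin : ∀ y : ℝ, ((x0, y) : Pt) ∈ hull T → y0 ≤ y) :
    ∃ A C : ℤ × ℤ, A ∈ T ∧ C ∈ T ∧ A.1 < C.1 ∧ ∃ t : ℝ, 0 < t ∧ t < 1 ∧
      (1 - t) • toPt A + t • toPt C = ((x0, y0) : Pt) := by
  obtain ⟨a, b, c, hab, hac, hbc, hTeq⟩ := tri_present (𝒯.card3 T hT)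
  have ha : a ∈ T := by rw [hTeq]; simp
  have hb : b ∈ T := by rw [hTeq]; simp
  have hc : c ∈ T := by rw [hTeq]; simp
  have hd : idet a b c ≠ 0 := idet_ne_zero (uni_idet 𝒯 hT ha hb hc hab hac hbc)
  rw [hTeq] at hp hmin
  obtain ⟨A, C, hAm, hCm, hlt, t, ht0, ht1, hteq⟩ := bottom_edge hab hac hbc hd hx0 hp hmin
  exact ⟨A, C, by rw [hTeq]; exact hAm, by rw [hTeq]; exact hCm, hlt, t, ht0, ht1, hteq⟩

lemma between_of_combo {A C : ℤ × ℤ} {x0 y0 t : ℝ} (hlt : A.1 < C.1)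
    (ht0 : 0 < t) (ht1 : t < 1)
    (hteq : (1 - t) • toPt A + t • toPt C = ((x0, y0) : Pt)) :
    (A.1 : ℝ) < x0 ∧ x0 < (C.1 : ℝ) := by
  have hx := congrArg Prod.fst hteq
  simp only [toPt, Prod.fst_add, Prod.smul_mk, smul_eq_mul] at hx
  have hACr : (A.1 : ℝ) < C.1 := by exact_mod_cast hlt
  constructor <;> nlinarith

lemma y_eq_zero_of_combo {A C : ℤ × ℤ} {x0 t : ℝ} (hA2 : 0 ≤ A.2) (hC2 : 0 ≤ C.2)
    (ht0 : 0 < t) (ht1 : t < 1)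
    (hteq : (1 - t) • toPt A + t • toPt C = ((x0, 0) : Pt)) : A.2 = 0 ∧ C.2 = 0 := by
  have hy := congrArg Prod.snd hteq
  simp only [toPt, Prod.snd_add, Prod.smul_mk, smul_eq_mul] at hy
  have hA2r : (0 : ℝ) ≤ A.2 := by exact_mod_cast hA2
  have hC2r : (0 : ℝ) ≤ C.2 := by exact_mod_cast hC2
  have h1 : (A.2 : ℝ) = 0 := by nlinarith
  have h2 : (C.2 : ℝ) = 0 := by nlinarith
  exact ⟨by exact_mod_cast h1, by exact_mod_cast h2⟩

lemma tris_subset_of_code_eq {m n : ℕ} {𝒯₁ 𝒯₂ : UnimodularTriangulation (gridRegion m n)}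
    (hcode : code 𝒯₁ = code 𝒯₂) : 𝒯₁.tris ⊆ 𝒯₂.tris := by
  classical
  intro Tstar hTstar
  obtain ⟨A0, hA0, C0, hC0, hlt0⟩ := exists_x_lt 𝒯₁ hTstar
  set x0 : ℝ := (A0.1 : ℝ) + 1 / 2 with hx0def
  have hx0 : ∀ k : ℤ, (k : ℝ) ≠ x0 := by
    intro k hk
    rw [hx0def] at hk
    have h2 : (2 * k : ℤ) = 2 * A0.1 + 1 := by
      have : (2 * k : ℝ) = 2 * (A0.1 : ℝ) + 1 := by linarith
      exact_mod_cast this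
    omega
  have hfibstar : ∃ y : ℝ, ((x0, y) : Pt) ∈ hull Tstar := by
    have hA0C0 : A0 ≠ C0 := by intro h; rw [h] at hlt0; exact lt_irrefl _ hlt0
    have hden : (0 : ℝ) < (C0.1 : ℝ) - A0.1 := by
      have : (A0.1 : ℝ) < C0.1 := by exact_mod_cast hlt0
      linarith
    have hd1 : (1 : ℝ) ≤ (C0.1 : ℝ) - A0.1 := by
      have : (A0.1 : ℤ) + 1 ≤ C0.1 := hlt0
      have h2 : ((A0.1 : ℤ) : ℝ) + 1 ≤ ((C0.1 : ℤ) : ℝ) := by exact_mod_cast this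
      linarith
    set t : ℝ := (x0 - A0.1) / ((C0.1 : ℝ) - A0.1) with htdef
    have ht0 : 0 ≤ t := div_nonneg (by rw [hx0def]; linarith) hden.le
    have ht1 : t ≤ 1 := by
      rw [htdef, div_le_one hden, hx0def]; linarith
    refine ⟨(1 - t) * A0.2 + t * C0.2, ?_⟩
    have hmem := mem_hull_pair (w1 := 1 - t) (w2 := t) hA0C0 (by linarith) ht0 (by ring)
    have heq : (1 - t) • toPt A0 + t • toPt C0
        = ((x0, (1 - t) * A0.2 + t * C0.2) : Pt) := by
      rw [Prod.ext_iff]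
      constructor
      · simp only [toPt, Prod.fst_add, Prod.smul_mk, smul_eq_mul]
        have hmul : t * ((C0.1 : ℝ) - A0.1) = x0 - A0.1 := by
          rw [htdef]; exact div_mul_cancel₀ _ (ne_of_gt hden)
        linear_combination hmul
      · simp only [toPt, Prod.snd_add, Prod.smul_mk, smul_eq_mul]
    rw [← heq]
    refine hull_mono ?_ hmem
    intro v hv
    rcases Finset.mem_insert.1 hv with h | h
    · rw [h]; exact hA0
    · rw [Finset.mem_singleton.1 h]; exact hC0
  suffices H : ∀ N : ℕ, ∀ T, T ∈ 𝒯₁.tris → (∃ y : ℝ, ((x0, y) : Pt) ∈ hull T) →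
      mu 𝒯₁ x0 T ≤ N → T ∈ 𝒯₂.tris by
    exact H (mu 𝒯₁ x0 Tstar) Tstar hTstar hfibstar le_rfl
  intro N
  induction N using Nat.strong_induction_on with
  | _ N IH =>
  intro T hT hfib hμN
  obtain ⟨ystart, hystart⟩ := hfib
  obtain ⟨y1, hy1mem, hy1min⟩ := fiber_min hystart
  obtain ⟨A, C, hAT, hCT, hltAC, t, ht0, ht1, hteq⟩ :=
    bottom_edge_of_tri 𝒯₁ hT hx0 hy1mem hy1min
  have hAC : A ≠ C := by intro h; rw [h] at hltAC; exact lt_irrefl _ hltAC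
  have hqAC : ((x0, y1) : Pt) ∈ hull ({A, C} : Finset (ℤ × ℤ)) := by
    rw [← hteq]
    exact mem_hull_pair hAC (by linarith) (by linarith) (by ring)
  have hreg := mem_gridRegion_iff.1 (hull_subset_region 𝒯₁ hT hy1mem)
  have hx0a : 0 ≤ x0 := hreg.1
  have hx0b : x0 ≤ (m : ℝ) := hreg.2.1
  have hy1a : (0 : ℝ) ≤ y1 := hreg.2.2.1
  have hy1b : y1 ≤ (n : ℝ) := hreg.2.2.2
  rcases eq_or_lt_of_le hy1a with hbase | hpos
  · -- base case: y1 = 0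
    have hq2 : ((x0, y1) : Pt) ∈ gridRegion m n :=
      mem_gridRegion_iff.2 ⟨hx0a, hx0b, hy1a, hy1b⟩
    rw [← 𝒯₂.cover] at hq2
    simp only [Set.mem_iUnion] at hq2
    obtain ⟨T2, hT2, hqT2⟩ := hq2
    have hmin2 : ∀ y : ℝ, ((x0, y) : Pt) ∈ hull T2 → y1 ≤ y := by
      intro y hy
      have h0 : (0 : ℝ) ≤ y := (mem_gridRegion_iff.1 (hull_subset_region 𝒯₂ hT2 hy)).2.2.1
      linarith [hbase]
    obtain ⟨A2, C2, hA2T2, hC2T2, hltA2, t2, ht20, ht21, hteq2⟩ :=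
      bottom_edge_of_tri 𝒯₂ hT2 hx0 hqT2 hmin2
    rw [← hbase] at hteq hteq2
    obtain ⟨hAz, hCz⟩ := y_eq_zero_of_combo (vert_mem_grid 𝒯₁ hT hAT).2.2.1
      (vert_mem_grid 𝒯₁ hT hCT).2.2.1 ht0 ht1 hteq
    obtain ⟨hA2z, hC2z⟩ := y_eq_zero_of_combo (vert_mem_grid 𝒯₂ hT2 hA2T2).2.2.1
      (vert_mem_grid 𝒯₂ hT2 hC2T2).2.2.1 ht20 ht21 hteq2
    have hA2C2 : A2 ≠ C2 := by intro h; rw [h] at hltA2; exact lt_irrefl _ hltA2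
    have hstep1 : C.1 = A.1 + 1 := by
      rcases row_step' (uniT_of_mem 𝒯₁ hT) hAT hCT hAC (hAz.trans hCz.symm) with h | h <;>
        omega
    have hstep2 : C2.1 = A2.1 + 1 := by
      rcases row_step' (uniT_of_mem 𝒯₂ hT2) hA2T2 hC2T2 hA2C2 (hA2z.trans hC2z.symm)
        with h | h <;> omega
    obtain ⟨hb1, hb2⟩ := between_of_combo hltAC ht0 ht1 hteq
    obtain ⟨hb3, hb4⟩ := between_of_combo hltA2 ht20 ht21 hteq2
    have hC2cast : (C2.1 : ℝ) = (A2.1 : ℝ) + 1 := by exact_mod_cast hstep2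
    have hCcast : (C.1 : ℝ) = (A.1 : ℝ) + 1 := by exact_mod_cast hstep1
    have h1 : A.1 < A2.1 + 1 := by
      have : (A.1 : ℝ) < (A2.1 : ℝ) + 1 := by linarith
      exact_mod_cast this
    have h2 : A2.1 < A.1 + 1 := by
      have : (A2.1 : ℝ) < (A.1 : ℝ) + 1 := by linarith
      exact_mod_cast this
    have hA_eq : A = A2 := Prod.ext (by omega) (by omega)
    have hC_eq : C = C2 := Prod.ext (by omega) (by omega)
    exact step_final hcode hT hAT hCT hltAC hT2 (hA_eq ▸ hA2T2) (hC_eq ▸ hC2T2)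
  · -- inductive case: 0 < y1
    have hex : ∀ k : ℕ, ∃ S, S ∈ 𝒯₁.tris ∧ ((x0, y1 - y1 / (k + 2)) : Pt) ∈ hull S := by
      intro k
      have hkpos : (0 : ℝ) < (k : ℝ) + 2 := by positivity
      have hδ1 : 0 < y1 / ((k : ℝ) + 2) := div_pos hpos hkpos
      have hδ2 : y1 / ((k : ℝ) + 2) ≤ y1 := div_le_self hpos.le (by linarith)
      have hmem : ((x0, y1 - y1 / ((k : ℝ) + 2)) : Pt) ∈ gridRegion m n := by
        rw [mem_gridRegion_iff]
        exact ⟨hx0a, hx0b, by linarith, by linarith⟩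
      rw [← 𝒯₁.cover] at hmem
      simp only [Set.mem_iUnion] at hmem
      obtain ⟨S, hS, hmemS⟩ := hmem
      exact ⟨S, hS, hmemS⟩
    choose g hg1 hg2 using hex
    obtain ⟨⟨T', hT'⟩, hinf⟩ :=
      Finite.exists_infinite_fiber (fun k : ℕ => (⟨g k, hg1 k⟩ : {S // S ∈ 𝒯₁.tris}))
    have hinfset : {k : ℕ | g k = T'}.Infinite := by
      have h1 := Set.infinite_coe_iff.1 hinf
      refine Set.Infinite.mono ?_ h1
      intro k hk
      have : (⟨g k, hg1 k⟩ : {S // S ∈ 𝒯₁.tris}) = ⟨T', hT'⟩ := hk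
      exact congrArg Subtype.val this
    have hclosed : IsClosed (hull T') := (T'.finite_toSet.image toPt).isClosed_convexHull ℝ
    have hqT' : ((x0, y1) : Pt) ∈ hull T' := by
      rw [← hclosed.closure_eq, Metric.mem_closure_iff]
      intro δ hδ
      obtain ⟨K, hKmem, hKgt⟩ := infinite_exists_gt hinfset (Nat.ceil (y1 / δ))
      have hKpos : (0 : ℝ) < (K : ℝ) + 2 := by positivity
      have hεpos : 0 < y1 / ((K : ℝ) + 2) := div_pos hpos hKpos
      refine ⟨(x0, y1 - y1 / ((K : ℝ) + 2)), ?_, ?_⟩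
      · have h := hg2 K
        rw [hKmem] at h
        exact h
      · have hceil : y1 / δ ≤ (Nat.ceil (y1 / δ) : ℝ) := Nat.le_ceil _
        have hKr : (Nat.ceil (y1 / δ) : ℝ) < (K : ℝ) := by exact_mod_cast hKgt
        have hlt : y1 / ((K : ℝ) + 2) < δ := by
          rw [div_lt_iff₀ hKpos]
          have hyδ : y1 / δ < (K : ℝ) := lt_of_le_of_lt hceil hKr
          rw [div_lt_iff₀ hδ] at hyδ
          nlinarith
        rw [Prod.dist_eq]
        simp only [dist_self]
        rw [Real.dist_eq]
        rw [show y1 - (y1 - y1 / ((K : ℝ) + 2)) = y1 / ((K : ℝ) + 2) from by ring]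
        rw [abs_of_pos hεpos]
        exact max_lt hδ hlt
    have hnl : ∀ v : ℤ × ℤ, toPt v ≠ ((x0, y1) : Pt) := by
      intro v hv
      exact hx0 v.1 (congrArg Prod.fst hv)
    obtain ⟨hAT', hCT'⟩ := pair_subset_other 𝒯₁ hT hT' hAT hCT hAC hqAC hnl hqT'
    obtain ⟨k0, hk0⟩ := hinfset.nonempty
    have hp0 : ((x0, y1 - y1 / ((k0 : ℝ) + 2)) : Pt) ∈ hull T' := by
      have h := hg2 k0
      rw [hk0] at h
      exact h
    have hεpos : 0 < y1 / ((k0 : ℝ) + 2) := div_pos hpos (by positivity)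
    obtain ⟨y1', hy1'mem, hy1'min⟩ := fiber_min hp0
    have hy1'lt : y1' < y1 := lt_of_le_of_lt (hy1'min _ hp0) (by linarith)
    obtain ⟨A', C', hA'T', hC'T', hltA', t', ht'0, ht'1, hteq'⟩ :=
      bottom_edge_of_tri 𝒯₁ hT' hx0 hy1'mem hy1'min
    have hA'C' : A' ≠ C' := by intro h; rw [h] at hltA'; exact lt_irrefl _ hltA'
    have hqA'C' : ((x0, y1') : Pt) ∈ hull ({A', C'} : Finset (ℤ × ℤ)) := by
      rw [← hteq']
      exact mem_hull_pair hA'C' (by linarith) (by linarith) (by ring)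
    have hy1'0 : (0 : ℝ) ≤ y1' :=
      (mem_gridRegion_iff.1 (hull_subset_region 𝒯₁ hT' hy1'mem)).2.2.1
    have hμlt : mu 𝒯₁ x0 T' < mu 𝒯₁ x0 T := by
      simp only [mu]
      apply Finset.card_lt_card
      have hsub : (𝒯₁.edges).filter (fun e => ∃ y : ℝ, 0 ≤ y ∧ ((x0, y) : Pt) ∈ hull e ∧
          ∀ y' : ℝ, ((x0, y') : Pt) ∈ hull T' → y < y') ⊆
          (𝒯₁.edges).filter (fun e => ∃ y : ℝ, 0 ≤ y ∧ ((x0, y) : Pt) ∈ hull e ∧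
          ∀ y' : ℝ, ((x0, y') : Pt) ∈ hull T → y < y') := by
        intro e he
        rw [Finset.mem_filter] at he ⊢
        obtain ⟨heE, y, hy0, hyhull, hylt⟩ := he
        refine ⟨heE, y, hy0, hyhull, ?_⟩
        intro y'' hy''
        have h1 : y < y1' := hylt y1' hy1'mem
        have h2 : y1 ≤ y'' := hy1min y'' hy''
        linarith
      rw [Finset.ssubset_iff_of_subset hsub]
      refine ⟨{A', C'}, ?_, ?_⟩
      · rw [Finset.mem_filter]
        refine ⟨pair_mem_edges 𝒯₁ hT' hA'T' hC'T' hA'C', y1', hy1'0, hqA'C', ?_⟩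
        intro y'' hy''
        have := hy1min y'' hy''
        linarith
      · intro hmem
        rw [Finset.mem_filter] at hmem
        obtain ⟨-, y, hy0, hyhull, hylt⟩ := hmem
        have hyT' : ((x0, y) : Pt) ∈ hull T' := by
          refine hull_mono ?_ hyhull
          intro v hv
          rcases Finset.mem_insert.1 hv with h | h
          · rw [h]; exact hA'T'
          · rw [Finset.mem_singleton.1 h]; exact hC'T'
        exact lt_irrefl y (hylt y hyT')
    have hT'2 : T' ∈ 𝒯₂.tris :=
      IH (mu 𝒯₁ x0 T') (lt_of_lt_of_le hμlt hμN) T' hT' ⟨_, hp0⟩ le_rfl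
    exact step_final hcode hT hAT hCT hltAC hT'2 hAT' hCT'

lemma code_injective {m n : ℕ} : Function.Injective
    (fun 𝒯 : UnimodularTriangulation (gridRegion m n) => code 𝒯) := by
  intro 𝒯₁ 𝒯₂ h
  apply UT_ext
  exact Finset.Subset.antisymm (tris_subset_of_code_eq h) (tris_subset_of_code_eq h.symm)

lemma f_le_pow (m n : ℕ) : f m n ≤ 2 ^ (2 * (m + 1) * ((2 * m + 1) * (2 * n + 1))) := by
  classical
  have hle : f m n ≤ Nat.card ((box m n) → Finset (Bool × Fin (m + 1))) :=
    Nat.card_le_card_of_injective _ (code_injective (m := m) (n := n))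
  have hcard : Nat.card ((box m n) → Finset (Bool × Fin (m + 1)))
      = (2 ^ (2 * (m + 1))) ^ ((2 * m + 1) * (2 * n + 1)) := by
    rw [Nat.card_eq_fintype_card, Fintype.card_fun]
    congr 1
    · rw [Fintype.card_finset, Fintype.card_prod, Fintype.card_bool, Fintype.card_fin]
    · rw [Fintype.card_coe, box, Finset.card_product]
      rw [Int.card_Icc, Int.card_Icc]
      have h1 : ((2 * (m : ℤ)) + 1 - 0).toNat = 2 * m + 1 := by omega
      have h2 : ((2 * (n : ℤ)) + 1 - 0).toNat = 2 * n + 1 := by omega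
      rw [h1, h2]
  rw [hcard, ← pow_mul] at hle
  exact hle

lemma f_zero (m : ℕ) : f m 0 = 0 := by
  rw [f, Nat.card_eq_zero]
  left
  constructor
  intro 𝒯
  have h00 : toPt ((0, 0) : ℤ × ℤ) ∈ gridRegion m 0 := by
    rw [toPt_mem_grid]
    exact ⟨le_rfl, Int.natCast_nonneg m, le_rfl, le_rfl⟩
  obtain ⟨T, hT, hvT⟩ := (𝒯.vertices (0, 0)).2 h00
  apply no_flat' (uniT_of_mem 𝒯 hT) (k := 0)
  intro v hv
  have h := vert_mem_grid 𝒯 hT hv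
  omega

end KZ

/-- for every positive integer `m`, the limit capacity
`c_m = lim_{n → ∞} log₂ f(m,n) / (mn)` exists as a finite real number. -/
theorem capacity_m_exists (m : ℕ) (hm : 0 < m) :
    ∃ c : ℝ, Filter.Tendsto
      (fun n : ℕ => Real.logb 2 (f m n) / ((m : ℝ) * (n : ℝ)))
      Filter.atTop (nhds c) := by
  classical
  set D : ℕ := 2 * (m + 1) * ((2 * m + 1) * 3) with hD
  have hpos : ∀ n : ℕ, 0 < n → 1 ≤ f m n := fun n hn => KZ.f_pos m hm n hn
  have hUB : ∀ n : ℕ, 1 ≤ n → Real.logb 2 (f m n) ≤ (D : ℝ) * n := by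
    intro n hn
    have h1 : (f m n : ℝ) ≤ (2 : ℝ) ^ (2 * (m + 1) * ((2 * m + 1) * (2 * n + 1))) := by
      have := KZ.f_le_pow m n
      exact_mod_cast this
    have hf1 : (1 : ℝ) ≤ (f m n : ℝ) := by exact_mod_cast hpos n hn
    have h2 : 2 * (m + 1) * ((2 * m + 1) * (2 * n + 1)) ≤ D * n := by
      rw [hD]
      have h3 : 2 * n + 1 ≤ 3 * n := by omega
      calc 2 * (m + 1) * ((2 * m + 1) * (2 * n + 1))
          ≤ 2 * (m + 1) * ((2 * m + 1) * (3 * n)) := by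
            apply Nat.mul_le_mul_left
            exact Nat.mul_le_mul_left _ h3
        _ = 2 * (m + 1) * ((2 * m + 1) * 3) * n := by ring
    calc Real.logb 2 (f m n)
        ≤ Real.logb 2 ((2 : ℝ) ^ (2 * (m + 1) * ((2 * m + 1) * (2 * n + 1)))) := by
          exact Real.logb_le_logb_of_le (by norm_num) (by linarith) h1
      _ = (2 * (m + 1) * ((2 * m + 1) * (2 * n + 1)) : ℕ) := by
          rw [Real.logb_pow, Real.logb_self_eq_one (by norm_num : (1:ℝ) < 2), mul_one]
      _ ≤ (D : ℝ) * n := by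
          rw [← Nat.cast_mul]
          exact_mod_cast h2
  set u : ℕ → ℝ := fun n => - Real.logb 2 (f m n) with hu
  have hu0 : u 0 = 0 := by
    simp [hu, KZ.f_zero m]
  have husub : Subadditive u := by
    intro a b
    rcases Nat.eq_zero_or_pos a with rfl | ha
    · rw [zero_add, hu0, zero_add]
    rcases Nat.eq_zero_or_pos b with rfl | hb
    · rw [add_zero, hu0, add_zero]
    have h1 : (1 : ℝ) ≤ (f m a : ℝ) := by exact_mod_cast hpos a ha
    have h2 : (1 : ℝ) ≤ (f m b : ℝ) := by exact_mod_cast hpos b hb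
    have h3 : (f m a : ℝ) * (f m b : ℝ) ≤ (f m (a + b) : ℝ) := by
      have := KZ.f_mul_le m a b
      exact_mod_cast this
    have key : Real.logb 2 ((f m a : ℝ)) + Real.logb 2 ((f m b : ℝ))
        ≤ Real.logb 2 ((f m (a + b) : ℝ)) := by
      rw [← Real.logb_mul (by linarith) (by linarith)]
      exact Real.logb_le_logb_of_le (by norm_num) (by nlinarith) h3
    simp only [hu]
    linarith
  have hbdd : BddBelow (Set.range fun n : ℕ => u n / n) := by
    refine ⟨-(D : ℝ), ?_⟩
    rintro x ⟨k, rfl⟩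
    rcases Nat.eq_zero_or_pos k with rfl | hk
    · simp only [hu0, Nat.cast_zero, div_zero]
      exact neg_nonpos.2 (Nat.cast_nonneg D)
    · have hub := hUB k hk
      have hkpos : (0 : ℝ) < (k : ℝ) := by exact_mod_cast hk
      rw [le_div_iff₀ hkpos]
      simp only [hu]
      linarith
  have htend0 := husub.tendsto_lim hbdd
  refine ⟨-(husub.lim) / m, ?_⟩
  have hm0 : ((m : ℝ)) ≠ 0 := by
    have : (0 : ℝ) < m := by exact_mod_cast hm
    linarith
  have htend : Filter.Tendsto (fun n : ℕ => -(u n / n) / m) Filter.atTop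
      (nhds (-(husub.lim) / m)) := (htend0.neg).div_const _
  apply htend.congr'
  filter_upwards [Filter.eventually_ge_atTop 1] with n hn
  have hn0 : ((n : ℝ)) ≠ 0 := by
    have : (0 : ℝ) < n := by exact_mod_cast hn
    linarith
  simp only [hu]
  ring
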